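/- arXiv:2509.10679 — 8 statements merged into one kernel-verified Lean document; each statement's English description precedes it below -/
import Mathlib

section
/- Let G = (V,E) be a finite simple graph that is CAD-complete, with Gallai–Edmonds decomposition GE(G) = (C,A,D), and assume C ≠ ∅ and D ≠ ∅. Let u ∈ C, v ∈ D, and let G' be obtained from G by adding the edge {u,v}. Then G is a subgraph of G', ν(G') = ν(G), and the Gallai–Edmonds decomposition of G' is GE(G') = (∅, A∪{u}, D∪(C∖{u})). -/
namespace GRT

variable {V : Type*}

/-- The matching number of a graph: the maximum size of a matching. -/
noncomputable def matchingNumber (G : SimpleGraph V) : ℕ :=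
  sSup {n | ∃ M : G.Subgraph, M.IsMatching ∧ M.edgeSet.ncard = n}

/-- `M` is a maximum matching of `G`. -/
def IsMaximumMatching (G : SimpleGraph V) (M : G.Subgraph) : Prop :=
  M.IsMatching ∧ ∀ M' : G.Subgraph, M'.IsMatching → M'.edgeSet.ncard ≤ M.edgeSet.ncard

/-- A vertex is essential if it is covered by every maximum matching. -/
def Essential (G : SimpleGraph V) (v : V) : Prop :=
  ∀ M : G.Subgraph, IsMaximumMatching G M → v ∈ M.verts

/-- The `D`-part of the Gallai–Edmonds decomposition: inessential vertices. -/
def geD (G : SimpleGraph V) : Set V := {v | ¬ Essential G v}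

/-- The `A`-part of the Gallai–Edmonds decomposition. -/
def geA (G : SimpleGraph V) : Set V := {v | v ∉ geD G ∧ ∃ u ∈ geD G, G.Adj v u}

/-- The `C`-part of the Gallai–Edmonds decomposition. -/
def geC (G : SimpleGraph V) : Set V := {v | v ∉ geD G ∧ v ∉ geA G}

/-- The vertex sets of the connected components of the induced subgraph `G[D]`,
viewed as subsets of the ambient vertex set. -/
def componentSets (G : SimpleGraph V) (D : Set V) : Set (Set V) :=
  {S | ∃ c : (G.induce D).ConnectedComponent, S = Subtype.val '' c.supp}

/-- The vertex sets of the connected components of `G`. -/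
def compSets (G : SimpleGraph V) : Set (Set V) :=
  {S | ∃ c : G.ConnectedComponent, S = c.supp}

/-- `G` is CAD-complete: distinct vertices of `C` are adjacent, vertices of `A` are
adjacent to all other vertices, and every component of `G[D]` is a clique. -/
def CADComplete (G : SimpleGraph V) : Prop :=
  (∀ u ∈ geC G, ∀ v ∈ geC G, u ≠ v → G.Adj u v) ∧
  (∀ u ∈ geA G, ∀ v, u ≠ v → G.Adj u v) ∧
  (∀ S ∈ componentSets G (geD G), G.IsClique S)

/-- `G` is a disjoint union of odd cliques. -/
def DComplete (G : SimpleGraph V) : Prop :=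
  ∀ c : G.ConnectedComponent, G.IsClique c.supp ∧ Odd c.supp.ncard

/-- The number of copies of `K_ℓ` (complete subgraphs on `ℓ` vertices) in `G`. -/
noncomputable def cliqueCount (G : SimpleGraph V) (ℓ : ℕ) : ℕ :=
  {s : Finset V | G.IsNClique ℓ s}.ncard

/-- The clique-cone graph `G_{n,x,y}` on vertex set `Fin n`: the first `x` vertices form
the clique set `X`, the next `y` vertices form the cone set `Y`, and two distinct
vertices are adjacent iff both lie in `X` or at least one lies in `Y`. -/
def cliqueCone (n x y : ℕ) : SimpleGraph (Fin n) :=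
  SimpleGraph.fromRel (fun u v =>
    (u.val < x ∧ v.val < x) ∨ (x ≤ u.val ∧ u.val < x + y) ∨ (x ≤ v.val ∧ v.val < x + y))

/-- `𝒢` is a `q`-colouring of `G`: a family of spanning subgraphs whose union is `G`. -/
def IsColouring {q : ℕ} (G : SimpleGraph V) (𝒢 : Fin q → SimpleGraph V) : Prop :=
  (⨆ j, 𝒢 j) = G

/-- A colouring is `(t₁K₂,…,t_qK₂)`-free if the `j`-th colour has no matching of size `t j`. -/
def IsFree {q : ℕ} (t : Fin q → ℕ) (𝒢 : Fin q → SimpleGraph V) : Prop :=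
  ∀ j, matchingNumber (𝒢 j) ≤ t j - 1

/-- `φ_{ℓ,n}(x,y) = C(x+y,ℓ) + C(y,ℓ−1)·(n−x−y)`. -/
def phi (ℓ n x y : ℕ) : ℕ :=
  Nat.choose (x + y) ℓ + Nat.choose y (ℓ - 1) * (n - x - y)

/-- The incidence graph of an indexed family of subsets of `U`. -/
def incidenceGraph {U I : Type*} (K : I → Finset U) : SimpleGraph (U ⊕ I) :=
  SimpleGraph.fromRel (fun a b => ∃ u i, a = Sum.inl u ∧ b = Sum.inr i ∧ u ∈ K i)

/-! ### Auxiliary lemmas -/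

lemma bddAbove_matchSet [Fintype V] (G : SimpleGraph V) :
    BddAbove {n | ∃ M : G.Subgraph, M.IsMatching ∧ M.edgeSet.ncard = n} := by
  classical
  refine ⟨Nat.card (Sym2 V), ?_⟩
  rintro n ⟨M, -, rfl⟩
  calc M.edgeSet.ncard ≤ (Set.univ : Set (Sym2 V)).ncard :=
        Set.ncard_le_ncard (Set.subset_univ _) (Set.toFinite _)
    _ = Nat.card (Sym2 V) := Set.ncard_univ _

lemma card_le_matchingNumber [Fintype V] {G : SimpleGraph V} {M : G.Subgraph}
    (hM : M.IsMatching) : M.edgeSet.ncard ≤ matchingNumber G :=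
  le_csSup (bddAbove_matchSet G) ⟨M, hM, rfl⟩

lemma bot_isMatching (G : SimpleGraph V) : (⊥ : G.Subgraph).IsMatching := by
  intro v hv
  simp only [SimpleGraph.Subgraph.verts_bot, Set.mem_empty_iff_false] at hv

lemma exists_maximumMatching [Fintype V] (G : SimpleGraph V) :
    ∃ M : G.Subgraph, IsMaximumMatching G M ∧ M.edgeSet.ncard = matchingNumber G := by
  have hne : {n | ∃ M : G.Subgraph, M.IsMatching ∧ M.edgeSet.ncard = n}.Nonempty :=
    ⟨_, ⊥, bot_isMatching G, rfl⟩
  have hmem := Nat.sSup_mem hne (bddAbove_matchSet G)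
  obtain ⟨M, hM, hcard⟩ := hmem
  exact ⟨M, ⟨hM, fun M' hM' => hcard ▸ card_le_matchingNumber hM'⟩, hcard⟩

lemma IsMaximumMatching.card_eq [Fintype V] {G : SimpleGraph V} {M : G.Subgraph}
    (h : IsMaximumMatching G M) : M.edgeSet.ncard = matchingNumber G := by
  refine le_antisymm (card_le_matchingNumber h.1) ?_
  exact csSup_le ⟨_, ⊥, bot_isMatching G, rfl⟩ (by rintro n ⟨N, hN, rfl⟩; exact h.2 N hN)

lemma isMaximumMatching_of_card [Fintype V] {G : SimpleGraph V} {M : G.Subgraph}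
    (hM : M.IsMatching) (h : M.edgeSet.ncard = matchingNumber G) : IsMaximumMatching G M :=
  ⟨hM, fun M' hM' => h ▸ card_le_matchingNumber hM'⟩

/-- Uniqueness of partners in a matching. -/
lemma matching_unique {G : SimpleGraph V} {M : G.Subgraph} (hM : M.IsMatching)
    {a b c : V} (hab : M.Adj a b) (hac : M.Adj a c) : b = c := by
  obtain ⟨w, -, hw⟩ := hM (M.edge_vert hab)
  rw [hw b hab, hw c hac]

/-- Copy a subgraph of `G` to a subgraph of `H` when its adjacency lies in `H`. -/
def copyTo {G H : SimpleGraph V} (M : G.Subgraph) (h : ∀ {x y}, M.Adj x y → H.Adj x y) :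
    H.Subgraph where
  verts := M.verts
  Adj := M.Adj
  adj_sub := h
  edge_vert := M.edge_vert
  symm := M.symm

@[simp] lemma copyTo_verts {G H : SimpleGraph V} (M : G.Subgraph)
    (h : ∀ {x y}, M.Adj x y → H.Adj x y) : (copyTo (H := H) M h).verts = M.verts := rfl

@[simp] lemma copyTo_adj {G H : SimpleGraph V} (M : G.Subgraph)
    (h : ∀ {x y}, M.Adj x y → H.Adj x y) {x y : V} :
    (copyTo (H := H) M h).Adj x y ↔ M.Adj x y := Iff.rfl

@[simp] lemma copyTo_edgeSet {G H : SimpleGraph V} (M : G.Subgraph)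
    (h : ∀ {x y}, M.Adj x y → H.Adj x y) : (copyTo (H := H) M h).edgeSet = M.edgeSet := by
  ext e
  induction e with
  | _ x y => simp [SimpleGraph.Subgraph.mem_edgeSet, copyTo]

lemma copyTo_isMatching {G H : SimpleGraph V} (M : G.Subgraph)
    (h : ∀ {x y}, M.Adj x y → H.Adj x y) (hM : M.IsMatching) :
    (copyTo (H := H) M h).IsMatching := hM

/-- Remove a matched pair `a, b` from a subgraph. -/
def delPair {G : SimpleGraph V} (M : G.Subgraph) (a b : V) : G.Subgraph where
  verts := M.verts \ {a, b}
  Adj x y := M.Adj x y ∧ x ∉ ({a, b} : Set V) ∧ y ∉ ({a, b} : Set V)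
  adj_sub h := M.adj_sub h.1
  edge_vert h := ⟨M.edge_vert h.1, h.2.1⟩
  symm := ⟨fun x y ⟨h, hx, hy⟩ => ⟨M.adj_symm h, hy, hx⟩⟩

@[simp] lemma delPair_verts {G : SimpleGraph V} (M : G.Subgraph) (a b : V) :
    (delPair M a b).verts = M.verts \ {a, b} := rfl

lemma delPair_adj {G : SimpleGraph V} {M : G.Subgraph} {a b x y : V} :
    (delPair M a b).Adj x y ↔ M.Adj x y ∧ x ∉ ({a, b} : Set V) ∧ y ∉ ({a, b} : Set V) :=
  Iff.rfl

lemma delPair_isMatching {G : SimpleGraph V} {M : G.Subgraph} (hM : M.IsMatching)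
    {a b : V} (hab : M.Adj a b) : (delPair M a b).IsMatching := by
  rintro x ⟨hx, hxab⟩
  obtain ⟨y, hy, hyu⟩ := hM hx
  refine ⟨y, ⟨hy, hxab, ?_⟩, ?_⟩
  · rintro (rfl | rfl)
    · exact hxab (by simp [matching_unique hM (M.adj_symm hy) hab])
    · exact hxab (by simp [matching_unique hM (M.adj_symm hy) (M.adj_symm hab)])
  · rintro z ⟨hz, -, -⟩
    exact hyu z hz

lemma delPair_edgeSet {G : SimpleGraph V} {M : G.Subgraph} (hM : M.IsMatching)
    {a b : V} (hab : M.Adj a b) :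
    (delPair M a b).edgeSet = M.edgeSet \ {s(a, b)} := by
  ext e
  induction e with
  | _ x y =>
    simp only [SimpleGraph.Subgraph.mem_edgeSet, delPair_adj, Set.mem_diff,
      Set.mem_singleton_iff, Set.mem_insert_iff]
    constructor
    · rintro ⟨hxy, hx, hy⟩
      refine ⟨hxy, fun he => ?_⟩
      rw [Sym2.eq_iff] at he
      rcases he with ⟨rfl, rfl⟩ | ⟨rfl, rfl⟩
      · exact hx (Or.inl rfl)
      · exact hy (Or.inl rfl)
    · rintro ⟨hxy, hne⟩
      refine ⟨hxy, ?_, ?_⟩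
      · rintro (rfl | rfl)
        · exact hne (by rw [matching_unique hM hxy hab])
        · exact hne (by rw [matching_unique hM hxy (M.adj_symm hab), Sym2.eq_swap])
      · rintro (rfl | rfl)
        · exact hne (by rw [matching_unique hM (M.adj_symm hxy) hab, Sym2.eq_swap])
        · exact hne (by rw [matching_unique hM (M.adj_symm hxy) (M.adj_symm hab)])

/-- `CA`-transfer: in a `CAD`-complete graph with `C, D ≠ ∅`, adding an
edge from `u ∈ C` to `v ∈ D` keeps the matching number and produces a graph with
Gallai–Edmonds decomposition `(∅, A∪{u}, D∪(C∖{u}))`. -/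
theorem GE_CA_transfer [Fintype V] (G : SimpleGraph V) (hG : CADComplete G)
    (u v : V) (hu : u ∈ geC G) (hv : v ∈ geD G) :
    G ≤ G ⊔ SimpleGraph.fromEdgeSet {s(u, v)} ∧
    matchingNumber (G ⊔ SimpleGraph.fromEdgeSet {s(u, v)}) = matchingNumber G ∧
    geC (G ⊔ SimpleGraph.fromEdgeSet {s(u, v)}) = ∅ ∧
    geA (G ⊔ SimpleGraph.fromEdgeSet {s(u, v)}) = geA G ∪ {u} ∧
    geD (G ⊔ SimpleGraph.fromEdgeSet {s(u, v)}) = geD G ∪ (geC G \ {u}) := by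
  classical
  set G' := G ⊔ SimpleGraph.fromEdgeSet {s(u, v)} with hG'def
  have huD : u ∉ geD G := hu.1
  have huA : u ∉ geA G := hu.2
  have hEu : Essential G u := not_not.mp huD
  have hne_uv : u ≠ v := fun h => huD (h ▸ hv)
  have hG'adj : ∀ x y : V, G'.Adj x y ↔ G.Adj x y ∨ (s(x, y) = s(u, v) ∧ x ≠ y) := by
    intro x y
    simp [hG'def, SimpleGraph.fromEdgeSet_adj]
  have hG'uv : G'.Adj u v := (hG'adj u v).2 (Or.inr ⟨rfl, hne_uv⟩)
  have hle : G ≤ G' := le_sup_left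
  have hupAdj : ∀ (M : G.Subgraph) {x y}, M.Adj x y → G'.Adj x y :=
    fun M _ _ h => hle (M.adj_sub h)
  have hdown : ∀ (M' : G'.Subgraph), ¬ M'.Adj u v → ∀ {x y}, M'.Adj x y → G.Adj x y := by
    intro M' hnuv x y h
    rcases (hG'adj x y).1 (M'.adj_sub h) with h' | ⟨he, -⟩
    · exact h'
    · rw [Sym2.eq_iff] at he
      rcases he with ⟨rfl, rfl⟩ | ⟨rfl, rfl⟩
      · exact absurd h hnuv
      · exact absurd (M'.adj_symm h) hnuv
  have hdeldown : ∀ (M' : G'.Subgraph) {x y}, (delPair M' u v).Adj x y → G.Adj x y := by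
    intro M' x y h
    rcases (hG'adj x y).1 ((delPair M' u v).adj_sub h) with h' | ⟨he, -⟩
    · exact h'
    · rw [Sym2.eq_iff] at he
      rcases he with ⟨hx, -⟩ | ⟨-, hy⟩
      · exact absurd (by simp [hx]) h.2.1
      · exact absurd (by simp [hy]) h.2.2
  have hνle : matchingNumber G ≤ matchingNumber G' := by
    obtain ⟨M, hM, hcard⟩ := exists_maximumMatching G
    calc matchingNumber G = M.edgeSet.ncard := hcard.symm
      _ = (copyTo M (hupAdj M)).edgeSet.ncard := by rw [copyTo_edgeSet]
      _ ≤ matchingNumber G' := card_le_matchingNumber (copyTo_isMatching _ _ hM.1)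
  have hν : matchingNumber G' = matchingNumber G := by
    obtain ⟨Mx, hMx, hMxcard⟩ := exists_maximumMatching G'
    refine le_antisymm ?_ hνle
    by_cases huvM : Mx.Adj u v
    · set N := copyTo (delPair Mx u v) (hdeldown Mx) with hNdef
      have hN : N.IsMatching := copyTo_isMatching _ _ (delPair_isMatching hMx.1 huvM)
      have hNcard : N.edgeSet.ncard + 1 = Mx.edgeSet.ncard := by
        rw [hNdef, copyTo_edgeSet, delPair_edgeSet hMx.1 huvM]
        exact Set.ncard_diff_singleton_add_one (SimpleGraph.Subgraph.mem_edgeSet.2 huvM) (Set.toFinite _)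
      have h1 : N.edgeSet.ncard ≤ matchingNumber G := card_le_matchingNumber hN
      rcases Nat.lt_or_ge (matchingNumber G) (matchingNumber G') with hlt | hge
      · exfalso
        have hNν : N.edgeSet.ncard = matchingNumber G := by omega
        have hmem := hEu N (isMaximumMatching_of_card hN hNν)
        rw [hNdef] at hmem
        exact hmem.2 (by simp)
      · exact hge
    · calc matchingNumber G' = Mx.edgeSet.ncard := hMxcard.symm
        _ = (copyTo Mx (hdown Mx huvM)).edgeSet.ncard := by rw [copyTo_edgeSet]
        _ ≤ matchingNumber G := card_le_matchingNumber (copyTo_isMatching _ _ hMx.1)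
  -- u is essential in G'
  have hEu' : Essential G' u := by
    intro M' hM'
    by_contra hnot
    have hnuv : ¬ M'.Adj u v := fun h => hnot (M'.edge_vert h)
    have hNmax : IsMaximumMatching G (copyTo M' (hdown M' hnuv)) := by
      refine isMaximumMatching_of_card (copyTo_isMatching _ _ hM'.1) ?_
      rw [copyTo_edgeSet, hM'.card_eq, hν]
    exact hnot (hEu _ hNmax)
  -- D vertices remain inessential in G'
  have hDsub : ∀ w ∈ geD G, w ∈ geD G' := by
    intro w hw
    have hw' : ¬ Essential G w := hw
    unfold Essential at hw'
    push_neg at hw'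
    obtain ⟨M, hMmax, hwM⟩ := hw'
    intro hEss
    have hNmax : IsMaximumMatching G' (copyTo M (hupAdj M)) :=
      isMaximumMatching_of_card (copyTo_isMatching _ _ hMmax.1)
        (by rw [copyTo_edgeSet, hMmax.card_eq, hν])
    exact hwM (hEss _ hNmax)
  -- A vertices remain essential in G'
  have hAess : ∀ a ∈ geA G, Essential G' a := by
    intro a ha M' hM'
    by_contra hnot
    have hEa : Essential G a := not_not.mp ha.1
    by_cases huvM : M'.Adj u v
    · have hav : a ≠ v := fun h => ha.1 (h ▸ hv)
      have hGva : G.Adj v a := (hG.2.1 a ha v hav).symm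
      set N1 := copyTo (delPair M' u v) (hdeldown M') with hN1def
      have hN1 : N1.IsMatching := copyTo_isMatching _ _ (delPair_isMatching hM'.1 huvM)
      have hm2 : (G.subgraphOfAdj hGva).IsMatching :=
        SimpleGraph.Subgraph.IsMatching.subgraphOfAdj hGva
      have hsupp : Disjoint N1.support (G.subgraphOfAdj hGva).support := by
        rw [hN1.support_eq_verts, hm2.support_eq_verts, hN1def]
        rw [Set.disjoint_right]
        intro x hx
        simp only [SimpleGraph.subgraphOfAdj_verts, Set.mem_insert_iff,
          Set.mem_singleton_iff] at hx
        rcases hx with rfl | rfl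
        · simp
        · intro hmem
          exact hnot hmem.1
      have hN : (N1 ⊔ G.subgraphOfAdj hGva).IsMatching := hN1.sup hm2 hsupp
      have hcard : (N1 ⊔ G.subgraphOfAdj hGva).edgeSet.ncard = matchingNumber G := by
        rw [SimpleGraph.Subgraph.edgeSet_sup, SimpleGraph.edgeSet_subgraphOfAdj, hN1def,
          copyTo_edgeSet, delPair_edgeSet hM'.1 huvM, Set.union_singleton]
        have h1 : s(u, v) ∈ M'.edgeSet := SimpleGraph.Subgraph.mem_edgeSet.2 huvM
        have h2 : s(v, a) ∉ M'.edgeSet \ {s(u, v)} := by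
          intro hmem
          exact hnot (M'.edge_vert (M'.adj_symm (SimpleGraph.Subgraph.mem_edgeSet.1 hmem.1)))
        rw [Set.ncard_insert_of_notMem h2 (Set.toFinite _)]
        have h3 := Set.ncard_diff_singleton_add_one h1 (Set.toFinite _)
        have h4 : M'.edgeSet.ncard = matchingNumber G' := hM'.card_eq
        omega
      have hmem := hEu _ (isMaximumMatching_of_card hN hcard)
      rw [SimpleGraph.Subgraph.verts_sup, hN1def] at hmem
      rcases hmem with h | h
      · exact h.2 (by simp)
      · simp only [SimpleGraph.subgraphOfAdj_verts, Set.mem_insert_iff,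
          Set.mem_singleton_iff] at h
        rcases h with rfl | rfl
        · exact hne_uv rfl
        · exact huA ha
    · have hNmax : IsMaximumMatching G (copyTo M' (hdown M' huvM)) :=
        isMaximumMatching_of_card (copyTo_isMatching _ _ hM'.1)
          (by rw [copyTo_edgeSet, hM'.card_eq, hν])
      exact hnot (hEa _ hNmax)
  -- C vertices other than u become inessential in G'
  have hCnoD : ∀ w ∈ geC G, ∀ {d}, d ∈ geD G → ¬ G.Adj w d :=
    fun w hw d hd hadj => hw.2 ⟨hw.1, d, hd, hadj⟩
  have hCsub : ∀ w, w ∈ geC G → w ≠ u → w ∈ geD G' := by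
    intro w hw hwu
    have hv' : ¬ Essential G v := hv
    unfold Essential at hv'
    push_neg at hv'
    obtain ⟨M, hMmax, hvM⟩ := hv'
    have hwM : w ∈ M.verts := not_not.mp hw.1 M hMmax
    have huM : u ∈ M.verts := hEu M hMmax
    obtain ⟨z, hwz, -⟩ := hMmax.1 hwM
    obtain ⟨u', huu', -⟩ := hMmax.1 huM
    set Mup := copyTo M (hupAdj M) with hMupdef
    have hMupM : Mup.IsMatching := copyTo_isMatching _ _ hMmax.1
    have hwv : w ≠ v := fun h => hw.1 (h ▸ hv)
    have hzD : z ∉ geD G := fun hz => hCnoD w hw hz (M.adj_sub hwz)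
    have hu'D : u' ∉ geD G := fun h => hCnoD u hu h (M.adj_sub huu')
    have hzv : z ≠ v := fun h => hvM (h ▸ M.edge_vert (M.adj_symm hwz))
    have hu'v : u' ≠ v := fun h => hvM (h ▸ M.edge_vert (M.adj_symm huu'))
    have hsuvM : s(u, v) ∉ M.edgeSet := fun h =>
      hvM (M.edge_vert (M.adj_symm (SimpleGraph.Subgraph.mem_edgeSet.1 h)))
    intro hEss
    by_cases hadjuw : M.Adj u w
    · -- `u` is matched to `w` in `M`
      have hMupuw : Mup.Adj u w := hadjuw
      have hm1 := delPair_isMatching hMupM hMupuw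
      have hm2 : (G'.subgraphOfAdj hG'uv).IsMatching :=
        SimpleGraph.Subgraph.IsMatching.subgraphOfAdj hG'uv
      have hsupp : Disjoint (delPair Mup u w).support (G'.subgraphOfAdj hG'uv).support := by
        rw [hm1.support_eq_verts, hm2.support_eq_verts, delPair_verts]
        rw [Set.disjoint_right]
        intro x hx
        simp only [SimpleGraph.subgraphOfAdj_verts, Set.mem_insert_iff,
          Set.mem_singleton_iff] at hx
        rcases hx with rfl | rfl
        · simp
        · intro hmem
          exact hvM hmem.1
      have hN : (delPair Mup u w ⊔ G'.subgraphOfAdj hG'uv).IsMatching := hm1.sup hm2 hsupp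
      have hcard : (delPair Mup u w ⊔ G'.subgraphOfAdj hG'uv).edgeSet.ncard
          = matchingNumber G' := by
        rw [SimpleGraph.Subgraph.edgeSet_sup, SimpleGraph.edgeSet_subgraphOfAdj,
          delPair_edgeSet hMupM hMupuw, hMupdef, copyTo_edgeSet, Set.union_singleton]
        have h1 : s(u, w) ∈ M.edgeSet := SimpleGraph.Subgraph.mem_edgeSet.2 hadjuw
        have h2 : s(u, v) ∉ M.edgeSet \ {s(u, w)} := fun h => hsuvM h.1
        rw [Set.ncard_insert_of_notMem h2 (Set.toFinite _)]
        have h3 := Set.ncard_diff_singleton_add_one h1 (Set.toFinite _)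
        have h4 : M.edgeSet.ncard = matchingNumber G := hMmax.card_eq
        omega
      have hmem := hEss _ (isMaximumMatching_of_card hN hcard)
      rw [SimpleGraph.Subgraph.verts_sup] at hmem
      rcases hmem with h | h
      · exact h.2 (by simp)
      · simp only [SimpleGraph.subgraphOfAdj_verts, Set.mem_insert_iff,
          Set.mem_singleton_iff] at h
        rcases h with rfl | rfl
        · exact hwu rfl
        · exact hwv rfl
    · -- `u` is not matched to `w`
      have huw : u ≠ w := fun h => hwu h.symm
      have hu'w : u' ≠ w := fun h => hadjuw (h ▸ huu')
      have hwz_ne : w ≠ z := (M.adj_sub hwz).ne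
      have huu'_ne : u ≠ u' := (M.adj_sub huu').ne
      have huz : u ≠ z := fun h => hadjuw (M.adj_symm (h ▸ hwz))
      have hu'z : u' ≠ z := fun h =>
        huw (matching_unique hMmax.1 (M.adj_symm (h ▸ huu')) (M.adj_symm hwz))
      have hGu'z : G.Adj u' z := by
        by_cases h1 : u' ∈ geA G
        · exact hG.2.1 u' h1 z hu'z
        · by_cases h2 : z ∈ geA G
          · exact (hG.2.1 z h2 u' (Ne.symm hu'z)).symm
          · exact hG.1 u' ⟨hu'D, h1⟩ z ⟨hzD, h2⟩ hu'z
      have hG'u'z : G'.Adj u' z := hle hGu'z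
      have hMupwz : Mup.Adj w z := hwz
      have hm1 : (delPair Mup w z).IsMatching := delPair_isMatching hMupM hMupwz
      have hadj2 : (delPair Mup w z).Adj u u' :=
        ⟨huu', by simp [huw, huz], by simp [hu'w, hu'z]⟩
      have hm2 : (delPair (delPair Mup w z) u u').IsMatching := delPair_isMatching hm1 hadj2
      have hmuv : (G'.subgraphOfAdj hG'uv).IsMatching :=
        SimpleGraph.Subgraph.IsMatching.subgraphOfAdj hG'uv
      have hmu'z : (G'.subgraphOfAdj hG'u'z).IsMatching :=
        SimpleGraph.Subgraph.IsMatching.subgraphOfAdj hG'u'z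
      have hd1 : Disjoint (delPair (delPair Mup w z) u u').support
          (G'.subgraphOfAdj hG'uv).support := by
        rw [hm2.support_eq_verts, hmuv.support_eq_verts, delPair_verts, delPair_verts]
        rw [Set.disjoint_right]
        intro x hx
        simp only [SimpleGraph.subgraphOfAdj_verts, Set.mem_insert_iff,
          Set.mem_singleton_iff] at hx
        rcases hx with rfl | rfl
        · simp
        · intro hmem
          exact hvM hmem.1.1
      have hm3 : (delPair (delPair Mup w z) u u' ⊔ G'.subgraphOfAdj hG'uv).IsMatching :=
        hm2.sup hmuv hd1
      have hd2 : Disjoint (delPair (delPair Mup w z) u u' ⊔ G'.subgraphOfAdj hG'uv).support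
          (G'.subgraphOfAdj hG'u'z).support := by
        rw [hm3.support_eq_verts, hmu'z.support_eq_verts, SimpleGraph.Subgraph.verts_sup,
          delPair_verts, delPair_verts]
        rw [Set.disjoint_right]
        intro x hx
        simp only [SimpleGraph.subgraphOfAdj_verts, Set.mem_insert_iff,
          Set.mem_singleton_iff] at hx
        rcases hx with rfl | rfl
        · rintro (⟨-, h2⟩ | h)
          · exact h2 (by simp)
          · simp only [SimpleGraph.subgraphOfAdj_verts, Set.mem_insert_iff,
              Set.mem_singleton_iff] at h
            rcases h with h | h
            · exact huu'_ne h.symm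
            · exact hu'v h
        · rintro (⟨⟨-, h2⟩, -⟩ | h)
          · exact h2 (by simp)
          · simp only [SimpleGraph.subgraphOfAdj_verts, Set.mem_insert_iff,
              Set.mem_singleton_iff] at h
            rcases h with h | h
            · exact huz h.symm
            · exact hzv h
      have hN : ((delPair (delPair Mup w z) u u' ⊔ G'.subgraphOfAdj hG'uv) ⊔
          G'.subgraphOfAdj hG'u'z).IsMatching := hm3.sup hmu'z hd2
      have hsuz : s(u', z) ∉ M.edgeSet := fun h =>
        huz (matching_unique hMmax.1 (M.adj_symm huu') (SimpleGraph.Subgraph.mem_edgeSet.1 h))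
      have hcard : ((delPair (delPair Mup w z) u u' ⊔ G'.subgraphOfAdj hG'uv) ⊔
          G'.subgraphOfAdj hG'u'z).edgeSet.ncard = matchingNumber G' := by
        rw [SimpleGraph.Subgraph.edgeSet_sup, SimpleGraph.Subgraph.edgeSet_sup,
          SimpleGraph.edgeSet_subgraphOfAdj, SimpleGraph.edgeSet_subgraphOfAdj,
          delPair_edgeSet hm1 hadj2, delPair_edgeSet hMupM hMupwz, hMupdef, copyTo_edgeSet,
          Set.union_singleton, Set.union_singleton]
        have he1 : s(w, z) ∈ M.edgeSet := SimpleGraph.Subgraph.mem_edgeSet.2 hwz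
        have hne12 : s(u, u') ≠ s(w, z) := by
          intro hh
          rw [Sym2.eq_iff] at hh
          rcases hh with ⟨h1, -⟩ | ⟨h1, -⟩
          · exact huw h1
          · exact huz h1
        have he2 : s(u, u') ∈ M.edgeSet \ {s(w, z)} :=
          ⟨SimpleGraph.Subgraph.mem_edgeSet.2 huu', hne12⟩
        have hf1 : s(u, v) ∉ (M.edgeSet \ {s(w, z)}) \ {s(u, u')} := fun h => hsuvM h.1.1
        have hf2 : s(u', z) ∉ insert s(u, v) ((M.edgeSet \ {s(w, z)}) \ {s(u, u')}) := by
          intro h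
          rcases h with h | h
          · rw [Sym2.eq_iff] at h
            rcases h with ⟨h1, -⟩ | ⟨h1, -⟩
            · exact huu'_ne h1.symm
            · exact hu'v h1
          · exact hsuz h.1.1
        rw [Set.ncard_insert_of_notMem hf2 (Set.toFinite _),
          Set.ncard_insert_of_notMem hf1 (Set.toFinite _)]
        have c1 := Set.ncard_diff_singleton_add_one he1 (Set.toFinite _)
        have c2 := Set.ncard_diff_singleton_add_one he2 (Set.toFinite _)
        have h4 : M.edgeSet.ncard = matchingNumber G := hMmax.card_eq
        omega
      have hmem := hEss _ (isMaximumMatching_of_card hN hcard)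
      rw [SimpleGraph.Subgraph.verts_sup, SimpleGraph.Subgraph.verts_sup] at hmem
      rcases hmem with (h | h) | h
      · exact h.1.2 (by simp)
      · simp only [SimpleGraph.subgraphOfAdj_verts, Set.mem_insert_iff,
          Set.mem_singleton_iff] at h
        rcases h with rfl | rfl
        · exact hwu rfl
        · exact hwv rfl
      · simp only [SimpleGraph.subgraphOfAdj_verts, Set.mem_insert_iff,
          Set.mem_singleton_iff] at h
        rcases h with rfl | rfl
        · exact hu'w rfl
        · exact hwz_ne rfl
  -- characterisation of the new `D`-set
  have hDchar : ∀ x, x ∈ geD G' ↔ (x ∈ geD G ∨ (x ∈ geC G ∧ x ≠ u)) := by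
    intro x
    constructor
    · intro hx
      by_cases h1 : x ∈ geD G
      · exact Or.inl h1
      · right
        have hxu : x ≠ u := by rintro rfl; exact hx hEu'
        refine ⟨⟨h1, fun hxA => hx (hAess x hxA)⟩, hxu⟩
    · rintro (h | ⟨h, hne⟩)
      · exact hDsub x h
      · exact hCsub x h hne
  have hAchar : geA G' = geA G ∪ {u} := by
    ext x
    simp only [Set.mem_union, Set.mem_singleton_iff]
    constructor
    · rintro ⟨hxD', -⟩
      have hxD : x ∉ geD G := fun h => hxD' ((hDchar x).2 (Or.inl h))
      by_cases hxA : x ∈ geA G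
      · exact Or.inl hxA
      · refine Or.inr ?_
        by_contra hxu
        exact hxD' ((hDchar x).2 (Or.inr ⟨⟨hxD, hxA⟩, hxu⟩))
    · rintro (hxA | rfl)
      · refine ⟨fun h => h (hAess x hxA), ?_⟩
        obtain ⟨d, hd, hadj⟩ := hxA.2
        exact ⟨d, hDsub d hd, hle hadj⟩
      · exact ⟨fun h => h hEu', v, hDsub v hv, hG'uv⟩
  refine ⟨le_sup_left, hν, ?_, hAchar, ?_⟩
  · ext x
    simp only [Set.mem_empty_iff_false, iff_false]
    rintro ⟨hxD', hxA'⟩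
    rw [hAchar] at hxA'
    simp only [Set.mem_union, Set.mem_singleton_iff, not_or] at hxA'
    have hxD : x ∉ geD G := fun h => hxD' ((hDchar x).2 (Or.inl h))
    exact hxD' ((hDchar x).2 (Or.inr ⟨⟨hxD, hxA'.1⟩, hxA'.2⟩))
  · ext x
    rw [Set.mem_union, Set.mem_diff, Set.mem_singleton_iff]
    exact hDchar x

end GRT
end

section
/- Let G = (V,E) be a finite simple graph that is a disjoint union of odd cliques (so GE(G) = (∅,∅,V)), and let L and K be the vertex sets of two distinct connected components of G, each of size at least 2 (hence at least 3). Let w ∈ L, and obtain G' from G by deleting all edges between w and L∖{w} and adding all edges between L∖{w} and K. Then GE(G') = GE(G) = (∅,∅,V), G' has the same number of connected components as G, G' is a disjoint union of odd cliques, and ν(G') = ν(G). -/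
namespace GRT

variable {V : Type*}

open SimpleGraph

section Aux
variable [Fintype V] {G : SimpleGraph V} {M : G.Subgraph}

lemma verts_ncard_eq (h : M.IsMatching) : M.verts.ncard = 2 * M.edgeSet.ncard := by
  classical
  haveI : Fintype M.verts := Fintype.ofFinite _
  haveI : DecidableRel M.coe.Adj := Classical.decRel _
  rw [Subgraph.isMatching_iff_forall_degree] at h
  have hd : 2 * M.coe.edgeFinset.card = Fintype.card M.verts := by
    rw [← M.coe.sum_degrees_eq_twice_card_edges]
    have h2 : ∀ v : M.verts, M.coe.degree v = 1 := by
      intro v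
      rw [Subgraph.coe_degree]
      rw [← h v v.2]
      congr!
    have h3 : ∑ v : M.verts, M.coe.degree v = Fintype.card M.verts := by
      rw [Finset.sum_congr (rfl : (Finset.univ : Finset M.verts) = _) (fun v _ => h2 v)]
      simp
    convert h3
  have he : M.coe.edgeFinset.card = M.edgeSet.ncard := by
    rw [← Subgraph.image_coe_edgeSet_coe,
      Set.ncard_image_of_injective _ (Sym2.map.injective Subtype.val_injective),
      Set.ncard_eq_toFinset_card']
    exact congrArg Finset.card (by ext e; simp)
  rw [← Nat.card_coe_set_eq, Nat.card_eq_fintype_card, ← hd, he]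

lemma sum_ncard_inter (s : Set V) [Fintype G.ConnectedComponent] :
    ∑ c : G.ConnectedComponent, (s ∩ c.supp).ncard = s.ncard := by
  classical
  rw [Set.ncard_eq_toFinset_card' s,
    Finset.card_eq_sum_card_fiberwise
      (f := fun v => G.connectedComponentMk v) (t := Finset.univ) (fun v _ => Finset.mem_univ _)]
  apply Finset.sum_congr rfl
  intro c _
  rw [Set.ncard_eq_toFinset_card']
  congr 1
  ext v
  simp [ConnectedComponent.mem_supp_iff, and_comm]

lemma matching_bound (hG : ∀ c : G.ConnectedComponent, Odd c.supp.ncard)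
    (h : M.IsMatching) :
    2 * M.edgeSet.ncard + Nat.card G.ConnectedComponent ≤ Fintype.card V := by
  classical
  haveI : Fintype G.ConnectedComponent := Fintype.ofFinite _
  have key : ∀ c : G.ConnectedComponent, (M.verts ∩ c.supp).ncard + 1 ≤ c.supp.ncard := by
    intro c
    have heven : Even (M.verts ∩ c.supp).ncard := by
      have hm := h.induce_connectedComponent c
      have := verts_ncard_eq hm
      simp only [Subgraph.induce_verts] at this
      exact ⟨(M.induce (M.verts ∩ c.supp)).edgeSet.ncard, by omega⟩
    have hsub : M.verts ∩ c.supp ⊆ c.supp := Set.inter_subset_right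
    have hle : (M.verts ∩ c.supp).ncard ≤ c.supp.ncard :=
      Set.ncard_le_ncard hsub (Set.toFinite _)
    rcases lt_or_eq_of_le hle with hlt | heq
    · omega
    · exfalso
      have hodd := hG c
      rw [← heq] at hodd
      exact (Nat.not_even_iff_odd.mpr hodd) heven
  have hsum := Finset.sum_le_sum (fun c (_ : c ∈ Finset.univ) => key c)
  rw [Finset.sum_add_distrib, Finset.sum_const, smul_eq_mul, mul_one,
    sum_ncard_inter (G := G) M.verts] at hsum
  have huniv : ∑ c : G.ConnectedComponent, c.supp.ncard = Fintype.card V := by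
    have := sum_ncard_inter (G := G) (Set.univ : Set V)
    simpa [Set.ncard_univ, Nat.card_eq_fintype_card] using this
  rw [huniv, verts_ncard_eq h] at hsum
  rw [Nat.card_eq_fintype_card, ← Finset.card_univ]
  exact hsum

lemma bot_isMatching_s12 : (⊥ : G.Subgraph).IsMatching := by
  intro v hv
  simp at hv

lemma pair_up (G : SimpleGraph V) : ∀ (n : ℕ) (S : Set V), S.ncard = 2 * n →
    (∀ a ∈ S, ∀ b ∈ S, a ≠ b → G.Adj a b) →
    ∃ M : G.Subgraph, M.IsMatching ∧ M.verts = S := by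
  intro n
  induction n with
  | zero =>
    intro S hS _
    rw [mul_zero, Set.ncard_eq_zero (Set.toFinite S)] at hS
    exact ⟨⊥, bot_isMatching_s12, by simp [hS]⟩
  | succ m ih =>
    intro S hS hcl
    have hane : S.Nonempty := by
      rw [← Set.ncard_pos (Set.toFinite S), hS]; omega
    obtain ⟨a, ha⟩ := hane
    have hS' : (S \ {a}).ncard = 2 * m + 1 := by
      rw [Set.ncard_diff_singleton_of_mem ha, hS]; omega
    have hbne : (S \ {a}).Nonempty := by
      rw [← Set.ncard_pos (Set.toFinite _), hS']; omega
    obtain ⟨b, hb⟩ := hbne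
    have hab : G.Adj a b := hcl a ha b hb.1 (fun h => hb.2 h.symm)
    have hS'' : ((S \ {a}) \ {b}).ncard = 2 * m := by
      rw [Set.ncard_diff_singleton_of_mem hb, hS']
      omega
    obtain ⟨M, hM, hMv⟩ := ih ((S \ {a}) \ {b}) hS''
      (fun x hx y hy hxy => hcl x hx.1.1 y hy.1.1 hxy)
    refine ⟨M ⊔ G.subgraphOfAdj hab, hM.sup (Subgraph.IsMatching.subgraphOfAdj hab) ?_, ?_⟩
    · rw [hM.support_eq_verts, (Subgraph.IsMatching.subgraphOfAdj hab).support_eq_verts, hMv]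
      simp only [SimpleGraph.subgraphOfAdj_verts]
      rw [Set.disjoint_left]
      rintro x hx (rfl | rfl)
      · exact hx.1.2 rfl
      · exact hx.2 rfl
    · rw [Subgraph.verts_sup, hMv]
      simp only [SimpleGraph.subgraphOfAdj_verts]
      ext x
      constructor
      · rintro (hx | (rfl | rfl))
        · exact hx.1.1
        · exact ha
        · exact hb.1
      · intro hx
        by_cases h1 : x = a
        · exact Or.inr (Or.inl h1)
        · by_cases h2 : x = b
          · exact Or.inr (Or.inr h2)
          · exact Or.inl ⟨⟨hx, h1⟩, h2⟩

lemma exists_matching_avoiding (hG : DComplete G) (rep : G.ConnectedComponent → V)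
    (hrep : ∀ c, rep c ∈ c.supp) :
    ∃ M : G.Subgraph, M.IsMatching ∧
      M.verts = {v | v ≠ rep (G.connectedComponentMk v)} := by
  classical
  have hc : ∀ c : G.ConnectedComponent, ∃ M : G.Subgraph,
      M.IsMatching ∧ M.verts = c.supp \ {rep c} := by
    intro c
    obtain ⟨m, hm⟩ := (hG c).2
    apply pair_up G m
    · rw [Set.ncard_diff_singleton_of_mem (hrep c), hm]
      omega
    · intro a ha b hb hab
      exact (hG c).1 ha.1 hb.1 hab
  choose f hf1 hf2 using hc
  refine ⟨⨆ c, f c, Subgraph.IsMatching.iSup hf1 ?_, ?_⟩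
  · intro c c' hne
    rw [(hf1 c).support_eq_verts, (hf1 c').support_eq_verts, hf2, hf2]
    rw [Set.disjoint_left]
    intro v hv hv'
    exact hne (((ConnectedComponent.mem_supp_iff _ _).mp hv.1).symm.trans
      ((ConnectedComponent.mem_supp_iff _ _).mp hv'.1))
  · rw [Subgraph.verts_iSup]
    ext v
    simp only [Set.mem_iUnion, hf2, Set.mem_setOf_eq]
    constructor
    · rintro ⟨c, ⟨hsupp, hne⟩⟩
      rw [ConnectedComponent.mem_supp_iff] at hsupp
      rw [hsupp]
      exact hne
    · intro hv
      exact ⟨G.connectedComponentMk v, ⟨rfl, hv⟩⟩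

lemma exists_max_matching_avoiding (hG : DComplete G) (rep : G.ConnectedComponent → V)
    (hrep : ∀ c, rep c ∈ c.supp) :
    ∃ M : G.Subgraph, IsMaximumMatching G M ∧
      M.verts = {v | v ≠ rep (G.connectedComponentMk v)} ∧
      2 * M.edgeSet.ncard + Nat.card G.ConnectedComponent = Fintype.card V := by
  classical
  obtain ⟨M, hM, hMv⟩ := exists_matching_avoiding hG rep hrep
  have hrange : {v : V | v = rep (G.connectedComponentMk v)} = Set.range rep := by
    ext v
    constructor
    · intro hv
      exact ⟨G.connectedComponentMk v, hv.symm⟩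
    · rintro ⟨c, rfl⟩
      have : G.connectedComponentMk (rep c) = c := (hrep c)
      simp only [Set.mem_setOf_eq, this]
  have hinj : Function.Injective rep := by
    intro c c' h
    have h1 : G.connectedComponentMk (rep c) = c := (hrep c)
    have h2 : G.connectedComponentMk (rep c') = c' := (hrep c')
    rw [← h1, ← h2, h]
  have hrcard : (Set.range rep).ncard = Nat.card G.ConnectedComponent := by
    rw [← Nat.card_coe_set_eq]
    exact Nat.card_range_of_injective hinj
  have hcompl : M.verts = {v : V | v = rep (G.connectedComponentMk v)}ᶜ := by
    rw [hMv]
    ext v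
    simp
  have hkey : 2 * M.edgeSet.ncard + Nat.card G.ConnectedComponent = Fintype.card V := by
    have := Set.ncard_add_ncard_compl {v : V | v = rep (G.connectedComponentMk v)}
      (Set.toFinite _) (Set.toFinite _)
    rw [← hcompl, hrange, hrcard, verts_ncard_eq hM] at this
    rw [← Nat.card_eq_fintype_card]
    omega
  refine ⟨M, ⟨hM, ?_⟩, hMv, hkey⟩
  intro M' hM'
  have := matching_bound (fun c => (hG c).2) hM'
  omega

lemma matchingNumber_eq_of_max (hmax : IsMaximumMatching G M) :
    matchingNumber G = M.edgeSet.ncard := by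
  apply le_antisymm
  · refine csSup_le ⟨0, ⟨⊥, bot_isMatching_s12, by simp⟩⟩ ?_
    rintro m ⟨M', hM', rfl⟩
    exact hmax.2 M' hM'
  · exact le_csSup ⟨M.edgeSet.ncard, by rintro m ⟨M', hM', rfl⟩; exact hmax.2 M' hM'⟩
      ⟨M, hmax.1, rfl⟩

lemma two_mul_matchingNumber (hG : DComplete G) :
    2 * matchingNumber G + Nat.card G.ConnectedComponent = Fintype.card V := by
  classical
  have hrep : ∀ c : G.ConnectedComponent, ∃ v, v ∈ c.supp := by
    intro c
    obtain ⟨v, hv⟩ := c.exists_rep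
    exact ⟨v, hv⟩
  choose rep hrep using hrep
  obtain ⟨M, hmax, _, hkey⟩ := exists_max_matching_avoiding hG rep hrep
  rw [matchingNumber_eq_of_max hmax]
  exact hkey

lemma geD_eq_univ (hG : DComplete G) : geD G = Set.univ := by
  classical
  ext v
  simp only [geD, Set.mem_setOf_eq, Set.mem_univ, iff_true]
  intro hess
  have hrep : ∀ c : G.ConnectedComponent,
      ∃ u, u ∈ c.supp ∧ (c = G.connectedComponentMk v → u = v) := by
    intro c
    by_cases h : c = G.connectedComponentMk v
    · exact ⟨v, by rw [h]; rfl, fun _ => rfl⟩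
    · obtain ⟨u, hu⟩ := c.exists_rep
      exact ⟨u, hu, fun h' => absurd h' h⟩
  choose rep hrep1 hrep2 using hrep
  obtain ⟨M, hmax, hMv, _⟩ := exists_max_matching_avoiding hG rep hrep1
  have hvnot : v ∉ M.verts := by
    rw [hMv]
    simp only [Set.mem_setOf_eq, not_not, ne_eq, Decidable.not_not]
    exact (hrep2 (G.connectedComponentMk v) rfl).symm
  exact hvnot (hess M hmax)

end Aux

/-- `D`-merging: let `G` be a disjoint union of odd cliques and `L ≠ K`
two of its nontrivial components, `w ∈ L`. Deleting all edges between `w` and `L∖{w}` and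
adding all edges between `L∖{w}` and `K` yields a graph `G'` with `GE(G') = (∅,∅,V)`,
the same number of connected components, which is again a disjoint union of odd cliques,
and with `ν(G') = ν(G)`. -/
theorem D_merging [Fintype V] (G : SimpleGraph V) (hG : DComplete G)
    (L K : Set V) (hL : L ∈ compSets G) (hK : K ∈ compSets G) (hLK : L ≠ K)
    (hLcard : 2 ≤ L.ncard) (hKcard : 2 ≤ K.ncard) (w : V) (hw : w ∈ L) :
    geC (SimpleGraph.fromRel (fun u v =>
        (G.Adj u v ∧ ¬(u = w ∧ v ∈ L) ∧ ¬(v = w ∧ u ∈ L)) ∨ (u ∈ L \ {w} ∧ v ∈ K))) = ∅ ∧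
    geA (SimpleGraph.fromRel (fun u v =>
        (G.Adj u v ∧ ¬(u = w ∧ v ∈ L) ∧ ¬(v = w ∧ u ∈ L)) ∨ (u ∈ L \ {w} ∧ v ∈ K))) = ∅ ∧
    geD (SimpleGraph.fromRel (fun u v =>
        (G.Adj u v ∧ ¬(u = w ∧ v ∈ L) ∧ ¬(v = w ∧ u ∈ L)) ∨ (u ∈ L \ {w} ∧ v ∈ K)))
      = Set.univ ∧
    Nat.card (SimpleGraph.fromRel (fun u v =>
        (G.Adj u v ∧ ¬(u = w ∧ v ∈ L) ∧ ¬(v = w ∧ u ∈ L)) ∨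
          (u ∈ L \ {w} ∧ v ∈ K))).ConnectedComponent
      = Nat.card G.ConnectedComponent ∧
    DComplete (SimpleGraph.fromRel (fun u v =>
        (G.Adj u v ∧ ¬(u = w ∧ v ∈ L) ∧ ¬(v = w ∧ u ∈ L)) ∨ (u ∈ L \ {w} ∧ v ∈ K))) ∧
    matchingNumber (SimpleGraph.fromRel (fun u v =>
        (G.Adj u v ∧ ¬(u = w ∧ v ∈ L) ∧ ¬(v = w ∧ u ∈ L)) ∨ (u ∈ L \ {w} ∧ v ∈ K)))
      = matchingNumber G := by
  classical
  set G' : SimpleGraph V := SimpleGraph.fromRel (fun u v =>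
      (G.Adj u v ∧ ¬(u = w ∧ v ∈ L) ∧ ¬(v = w ∧ u ∈ L)) ∨ (u ∈ L \ {w} ∧ v ∈ K)) with hG'def
  -- basic setup
  obtain ⟨cL, hcL⟩ := hL
  obtain ⟨cK, hcK⟩ := hK
  have hKne : K.Nonempty := by
    rw [← Set.ncard_pos (Set.toFinite K)]; omega
  obtain ⟨k, hk⟩ := hKne
  have hLsupp : L = (G.connectedComponentMk w).supp := by
    rw [hcL]
    have : w ∈ cL.supp := hcL ▸ hw
    exact congrArg ConnectedComponent.supp ((ConnectedComponent.mem_supp_iff _ _).mp this).symm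
  have hKsupp : K = (G.connectedComponentMk k).supp := by
    rw [hcK]
    have : k ∈ cK.supp := hcK ▸ hk
    exact congrArg ConnectedComponent.supp ((ConnectedComponent.mem_supp_iff _ _).mp this).symm
  have hwk : G.connectedComponentMk w ≠ G.connectedComponentMk k := by
    intro h
    exact hLK (by rw [hLsupp, hKsupp, h])
  have hmemL : ∀ v, v ∈ L ↔ G.connectedComponentMk v = G.connectedComponentMk w := by
    intro v; rw [hLsupp]; exact ConnectedComponent.mem_supp_iff _ _
  have hmemK : ∀ v, v ∈ K ↔ G.connectedComponentMk v = G.connectedComponentMk k := by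
    intro v; rw [hKsupp]; exact ConnectedComponent.mem_supp_iff _ _
  have hGadj : ∀ u v, G.Adj u v ↔
      u ≠ v ∧ G.connectedComponentMk u = G.connectedComponentMk v := by
    intro u v
    constructor
    · exact fun h => ⟨h.ne, ConnectedComponent.connectedComponentMk_eq_of_adj h⟩
    · rintro ⟨hne, hmk⟩
      exact (hG (G.connectedComponentMk u)).1 rfl ((ConnectedComponent.mem_supp_iff _ _).mpr hmk.symm) hne
  -- the block function
  set b : V → G.ConnectedComponent := fun v =>
    if v ∈ L \ {w} then G.connectedComponentMk k else G.connectedComponentMk v with hbdef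
  have hbw : b w = G.connectedComponentMk w := by
    rw [hbdef]
    exact if_neg (fun h => h.2 rfl)
  have hkL : k ∉ L \ {w} := by
    rintro ⟨hkL, -⟩
    exact hwk ((hmemL k).mp hkL).symm
  have hbk : b k = G.connectedComponentMk k := by
    rw [hbdef]
    exact if_neg hkL
  have hbmem : ∀ v, v ∈ L \ {w} → b v = G.connectedComponentMk k := by
    intro v hv
    rw [hbdef]
    exact if_pos hv
  have hbnot : ∀ v, v ∉ L \ {w} → b v = G.connectedComponentMk v := by
    intro v hv
    rw [hbdef]
    exact if_neg hv
  -- adjacency characterization of G'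
  have hadj : ∀ u v, G'.Adj u v ↔ u ≠ v ∧ b u = b v := by
    have claim1 : ∀ u v, ((G.Adj u v ∧ ¬(u = w ∧ v ∈ L) ∧ ¬(v = w ∧ u ∈ L)) ∨
        (u ∈ L \ {w} ∧ v ∈ K)) → b u = b v := by
      rintro u v (⟨huv, h1, h2⟩ | ⟨hu, hv⟩)
      · have hmk : G.connectedComponentMk u = G.connectedComponentMk v :=
          ConnectedComponent.connectedComponentMk_eq_of_adj huv
        by_cases hu : u ∈ L \ {w} <;> by_cases hv : v ∈ L \ {w}
        · rw [hbmem u hu, hbmem v hv]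
        · exfalso
          have hvL : v ∈ L := by
            rw [hmemL]; rw [← hmk]; exact (hmemL u).mp hu.1
          have hvw : v = w := by
            by_contra hc
            exact hv ⟨hvL, hc⟩
          exact h2 ⟨hvw, hu.1⟩
        · exfalso
          have huL : u ∈ L := by
            rw [hmemL, hmk]; exact (hmemL v).mp hv.1
          have huw : u = w := by
            by_contra hc
            exact hu ⟨huL, hc⟩
          exact h1 ⟨huw, hv.1⟩
        · rw [hbnot u hu, hbnot v hv, hmk]
      · have hvnot : v ∉ L \ {w} := by
          rintro ⟨hvL, -⟩
          exact hwk (((hmemL v).mp hvL).symm.trans ((hmemK v).mp hv))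
        rw [hbmem u hu, hbnot v hvnot, (hmemK v).mp hv]
    intro u v
    rw [hG'def, SimpleGraph.fromRel_adj]
    constructor
    · rintro ⟨hne, h | h⟩
      · exact ⟨hne, claim1 u v h⟩
      · exact ⟨hne, (claim1 v u h).symm⟩
    · rintro ⟨hne, hb⟩
      refine ⟨hne, ?_⟩
      by_cases hu : u ∈ L \ {w} <;> by_cases hv : v ∈ L \ {w}
      · left; left
        refine ⟨(hGadj u v).mpr ⟨hne, ?_⟩, ?_, ?_⟩
        · rw [((hmemL u).mp hu.1), ((hmemL v).mp hv.1)]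
        · rintro ⟨rfl, -⟩; exact hu.2 rfl
        · rintro ⟨rfl, -⟩; exact hv.2 rfl
      · left; right
        refine ⟨hu, ?_⟩
        rw [hmemK]
        rw [hbmem u hu] at hb
        rw [← hbnot v hv, ← hb]
      · right; right
        refine ⟨hv, ?_⟩
        rw [hmemK]
        rw [hbmem v hv] at hb
        rw [← hbnot u hu, hb]
      · left; left
        rw [hbnot u hu, hbnot v hv] at hb
        refine ⟨(hGadj u v).mpr ⟨hne, hb⟩, ?_, ?_⟩
        · rintro ⟨rfl, hvL⟩
          exact hv ⟨hvL, fun h => hne h.symm⟩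
        · rintro ⟨rfl, huL⟩
          exact hu ⟨huL, fun h => hne h⟩
  -- reachability characterization
  have hwalk : ∀ u v : V, G'.Walk u v → b u = b v := by
    intro u v p
    induction p with
    | nil => rfl
    | cons h _ ih => exact (((hadj _ _).mp h).2).trans ih
  have hreach : ∀ u v : V, G'.Reachable u v ↔ b u = b v := by
    intro u v
    constructor
    · rintro ⟨p⟩; exact hwalk u v p
    · intro hb
      by_cases huv : u = v
      · rw [huv]
      · exact ((hadj u v).mpr ⟨huv, hb⟩).reachable
  have hsupp' : ∀ v : V, (G'.connectedComponentMk v).supp = {u | b u = b v} := by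
    intro v
    ext u
    rw [ConnectedComponent.mem_supp_iff, ConnectedComponent.eq]
    exact hreach u v
  -- fibers of b
  have hfib_w : {u | b u = G.connectedComponentMk w} = {w} := by
    ext u
    simp only [Set.mem_setOf_eq, Set.mem_singleton_iff]
    constructor
    · intro hu
      by_cases h : u ∈ L \ {w}
      · exact absurd ((hbmem u h).symm.trans hu) (fun hc => hwk hc.symm)
      · rw [hbnot u h] at hu
        have : u ∈ L := (hmemL u).mpr hu
        by_contra hc
        exact h ⟨this, hc⟩
    · rintro rfl; exact hbw
  have hfib_k : {u | b u = G.connectedComponentMk k} = (L \ {w}) ∪ K := by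
    ext u
    simp only [Set.mem_setOf_eq, Set.mem_union]
    constructor
    · intro hu
      by_cases h : u ∈ L \ {w}
      · exact Or.inl h
      · rw [hbnot u h] at hu
        exact Or.inr ((hmemK u).mpr hu)
    · rintro (h | h)
      · exact hbmem u h
      · have hnot : u ∉ L \ {w} := by
          rintro ⟨hL', -⟩
          exact hwk (((hmemL u).mp hL').symm.trans ((hmemK u).mp h))
        rw [hbnot u hnot]
        exact (hmemK u).mp h
  have hfib_other : ∀ c : G.ConnectedComponent, c ≠ G.connectedComponentMk w →
      c ≠ G.connectedComponentMk k → {u | b u = c} = c.supp := by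
    intro c hcw hck
    ext u
    simp only [Set.mem_setOf_eq, ConnectedComponent.mem_supp_iff]
    by_cases h : u ∈ L \ {w}
    · rw [hbmem u h]
      constructor
      · intro hc; exact absurd hc.symm hck
      · intro hc
        exact absurd (((hmemL u).mp h.1) ▸ hc : G.connectedComponentMk w = c).symm hcw
    · rw [hbnot u h]
  -- D-completeness of G'
  have hLodd : Odd L.ncard := by
    rw [hLsupp]; exact (hG _).2
  have hKodd : Odd K.ncard := by
    rw [hKsupp]; exact (hG _).2
  have hG' : DComplete G' := by
    intro c'
    induction c' using SimpleGraph.ConnectedComponent.ind with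
    | _ v =>
    have hsupp := hsupp' v
    constructor
    · intro x hx y hy hxy
      rw [hsupp, Set.mem_setOf_eq] at hx hy
      exact (hadj x y).mpr ⟨hxy, hx.trans hy.symm⟩
    · rw [hsupp]
      by_cases h1 : b v = G.connectedComponentMk w
      · rw [h1, hfib_w]
        simp
      · by_cases h2 : b v = G.connectedComponentMk k
        · rw [h2, hfib_k]
          have hdisj : Disjoint (L \ {w}) K := by
            rw [Set.disjoint_left]
            rintro x ⟨hxL, -⟩ hxK
            exact hwk (((hmemL x).mp hxL).symm.trans ((hmemK x).mp hxK))
          rw [Set.ncard_union_eq hdisj (Set.toFinite _) (Set.toFinite _)]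
          rw [Set.ncard_diff_singleton_of_mem hw]
          obtain ⟨a, hA⟩ := hLodd
          obtain ⟨bq, hB⟩ := hKodd
          rw [hA, hB]
          exact ⟨a + bq, by omega⟩
        · rw [hfib_other (b v) h1 h2]
          exact (hG _).2
  -- the component bijection
  have hβ : ∀ (u v : V) (p : G'.Walk u v), p.IsPath → b u = b v :=
    fun u v p _ => hwalk u v p
  set β : G'.ConnectedComponent → G.ConnectedComponent := ConnectedComponent.lift b hβ with hβdef
  have hβmk : ∀ v, β (G'.connectedComponentMk v) = b v := fun v => rfl
  have hβinj : Function.Injective β := by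
    intro c1 c2 h
    induction c1 using SimpleGraph.ConnectedComponent.ind with
    | _ u =>
    induction c2 using SimpleGraph.ConnectedComponent.ind with
    | _ v =>
    rw [hβmk, hβmk] at h
    exact ConnectedComponent.sound ((hreach u v).mpr h)
  have hβsurj : Function.Surjective β := by
    intro c
    by_cases h1 : c = G.connectedComponentMk w
    · exact ⟨G'.connectedComponentMk w, by rw [hβmk, hbw, h1]⟩
    · by_cases h2 : c = G.connectedComponentMk k
      · exact ⟨G'.connectedComponentMk k, by rw [hβmk, hbk, h2]⟩
      · induction c using SimpleGraph.ConnectedComponent.ind with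
        | _ v =>
        refine ⟨G'.connectedComponentMk v, ?_⟩
        rw [hβmk]
        apply hbnot
        intro hv
        exact h1 ((hmemL v).mp hv.1)
  have hcard : Nat.card G'.ConnectedComponent = Nat.card G.ConnectedComponent :=
    Nat.card_eq_of_bijective β ⟨hβinj, hβsurj⟩
  -- assemble
  have hgeD : geD G' = Set.univ := geD_eq_univ hG'
  have hgeA : geA G' = ∅ := by
    ext v
    simp [geA, hgeD]
  have hgeC : geC G' = ∅ := by
    ext v
    simp [geC, hgeA, hgeD]
  have hnum1 := two_mul_matchingNumber hG'
  have hnum2 := two_mul_matchingNumber hG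
  refine ⟨hgeC, hgeA, hgeD, hcard, hG', ?_⟩
  omega

end GRT
end

section
/- Let U be a finite set, let (X_i)_{i∈I} and (Y_j)_{j∈J} be finite indexed families of subsets of U, define σ(T) = Σ_{i∈I} ⌊|T∩X_i|/2⌋ + Σ_{j∈J} |T∩Y_j| − |T| for T ⊆ U, and suppose T ⊆ U is σ-maximal. Then: (1) Y_j ⊆ T for every j ∈ J; (2) for every i ∈ I, either X_i ⊆ T or |T∩X_i| is even; (3) the incidence graph of the family (X_i ∖ T)_{i∈I} on vertex set U∖T is acyclic. -/
namespace GRT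

variable {V : Type*}

open SimpleGraph in
private lemma list_aux_grt {α : Type*} {l m : List α} {v : α} (h : m ++ [v] = v :: l)
    (hl : l.Nodup) (hne : l ≠ []) : m.Nodup := by
  obtain rfl | ⟨l', w, rfl⟩ := l.eq_nil_or_concat
  · exact absurd rfl hne
  · obtain ⟨h1, h2⟩ := List.append_inj' (by simpa using h : m ++ [v] = (v :: l') ++ [w]) (by simp)
    rw [h1]
    rw [List.concat_eq_append, List.nodup_append_comm] at hl
    simp_all

open SimpleGraph in
private lemma darts_fst_nodup_grt {V : Type*} {G : SimpleGraph V} {v : V} {p : G.Walk v v}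
    (hp : p.IsCycle) : (p.darts.map (·.fst)).Nodup := by
  have hne : p.support.tail ≠ [] := by
    intro h
    apply hp.not_nil
    rw [Walk.nil_iff_length_eq]
    have h2 := p.length_support
    rw [p.support_eq_cons, h] at h2
    simpa using h2.symm
  have h3 := p.map_fst_darts_append
  rw [p.support_eq_cons] at h3
  exact list_aux_grt h3 hp.support_nodup hne


/-- `σ`-maximal sets: if `T` is `σ`-maximal for
`σ(T) = Σ_i ⌊|T∩X_i|/2⌋ + Σ_j |T∩Y_j| − |T|`, then every `Y_j ⊆ T`, every `X_i` is either
contained in `T` or meets `T` in an even number of vertices, and the incidence graph of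
the family `(X_i ∖ T)` is acyclic. -/
theorem sigma_maximal {U I J : Type*} [DecidableEq U] [Fintype U] [Fintype I] [Fintype J]
    (X : I → Finset U) (Y : J → Finset U) (σ : Finset U → ℤ)
    (hσ : ∀ S : Finset U,
      σ S = (∑ i, (((S ∩ X i).card / 2 : ℕ) : ℤ)) + (∑ j, ((S ∩ Y j).card : ℤ)) - S.card)
    (T : Finset U)
    (hmax : ∀ S : Finset U, σ S ≤ σ T)
    (hstrict : ∀ T' : Finset U, T ⊂ T' → σ T' < σ T) :
    (∀ j, Y j ⊆ T) ∧
    (∀ i, X i ⊆ T ∨ Even (T ∩ X i).card) ∧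
    (incidenceGraph (fun i => X i \ T)).IsAcyclic := by

  classical
  -- The key deduction: a nonempty set `A` disjoint from `T` whose addition does not
  -- decrease `σ` contradicts strict maximality.
  have key : ∀ (A : Finset U) (g : I → ℕ) (h : J → ℕ), A.Nonempty → Disjoint A T →
      (∀ i, (T ∩ X i).card / 2 + g i ≤ ((T ∪ A) ∩ X i).card / 2) →
      (∀ j, (T ∩ Y j).card + h j ≤ ((T ∪ A) ∩ Y j).card) →
      (A.card ≤ ∑ i, g i + ∑ j, h j) → False := by
    intro A g h hAne hdisj hg hh hcard
    have hsub : T ⊂ T ∪ A := by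
      obtain ⟨a, ha⟩ := hAne
      refine (Finset.ssubset_iff_of_subset Finset.subset_union_left).2
        ⟨a, Finset.mem_union_right _ ha, fun hz => Finset.disjoint_left.1 hdisj ha hz⟩
    have hlt := hstrict _ hsub
    rw [hσ, hσ] at hlt
    have hcardU : (T ∪ A).card = T.card + A.card := Finset.card_union_of_disjoint hdisj.symm
    have h1 : ∑ i, (((T ∩ X i).card / 2 : ℕ) : ℤ) + ∑ i, (g i : ℤ)
        ≤ ∑ i, ((((T ∪ A) ∩ X i).card / 2 : ℕ) : ℤ) := by
      rw [← Finset.sum_add_distrib]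
      refine Finset.sum_le_sum fun i _ => ?_
      exact_mod_cast hg i
    have h2 : ∑ j, (((T ∩ Y j).card : ℕ) : ℤ) + ∑ j, (h j : ℤ)
        ≤ ∑ j, ((((T ∪ A) ∩ Y j).card : ℕ) : ℤ) := by
      rw [← Finset.sum_add_distrib]
      refine Finset.sum_le_sum fun j _ => ?_
      exact_mod_cast hh j
    have h3 : (A.card : ℤ) ≤ ∑ i, (g i : ℤ) + ∑ j, (h j : ℤ) := by
      have := hcard
      push_cast [← Nat.cast_sum]
      exact_mod_cast hcard
    rw [hcardU, Nat.cast_add] at hlt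
    linarith
  have part1 : ∀ j, Y j ⊆ T := by
    intro j u hu
    by_contra huT
    refine key {u} 0 (fun j' => if j' = j then 1 else 0) ⟨u, Finset.mem_singleton_self u⟩
      (Finset.disjoint_singleton_left.2 huT) ?_ ?_ ?_
    · intro i
      simp only [Pi.zero_apply, add_zero]
      exact Nat.div_le_div_right (Finset.card_le_card (Finset.inter_subset_inter
        Finset.subset_union_left (le_refl _)))
    · intro j'
      by_cases hj : j' = j
      · subst hj
        beta_reduce; rw [if_pos rfl]
        have hss : T ∩ Y j' ⊂ (T ∪ {u}) ∩ Y j' := by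
          refine Finset.ssubset_iff_of_subset (Finset.inter_subset_inter
            Finset.subset_union_left (le_refl _)) |>.2 ⟨u, ?_, ?_⟩
          · exact Finset.mem_inter.2 ⟨Finset.mem_union_right _ (Finset.mem_singleton_self u), hu⟩
          · intro hz
            exact huT (Finset.mem_inter.1 hz).1
        exact Finset.card_lt_card hss
      · simp only [if_neg hj, add_zero]
        exact Finset.card_le_card (Finset.inter_subset_inter Finset.subset_union_left (le_refl _))
    · simp
  have part2 : ∀ i, X i ⊆ T ∨ Even (T ∩ X i).card := by
    intro i
    by_contra hcon
    push_neg at hcon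
    obtain ⟨hnsub, hodd⟩ := hcon
    rw [Nat.not_even_iff_odd] at hodd
    obtain ⟨u, huX, huT⟩ := Finset.not_subset.1 hnsub
    refine key {u} (fun i' => if i' = i then 1 else 0) 0 ⟨u, Finset.mem_singleton_self u⟩
      (Finset.disjoint_singleton_left.2 huT) ?_ ?_ ?_
    · intro i'
      by_cases hi : i' = i
      · subst hi
        have hss : T ∩ X i' ⊂ (T ∪ {u}) ∩ X i' := by
          refine Finset.ssubset_iff_of_subset (Finset.inter_subset_inter
            Finset.subset_union_left (le_refl _)) |>.2 ⟨u, ?_, ?_⟩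
          · exact Finset.mem_inter.2 ⟨Finset.mem_union_right _ (Finset.mem_singleton_self u), huX⟩
          · intro hz
            exact huT (Finset.mem_inter.1 hz).1
        have hlt := Finset.card_lt_card hss
        obtain ⟨k, hk⟩ := hodd
        beta_reduce; rw [if_pos rfl]
        omega

      · simp only [if_neg hi, add_zero]
        exact Nat.div_le_div_right (Finset.card_le_card (Finset.inter_subset_inter
          Finset.subset_union_left (le_refl _)))
    · intro j
      simp only [Pi.zero_apply, add_zero]
      exact Finset.card_le_card (Finset.inter_subset_inter Finset.subset_union_left (le_refl _))
    · simp
  refine ⟨part1, part2, ?_⟩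
  intro v p hp
  have hadj : ∀ a b : U ⊕ I, (incidenceGraph (fun i => X i \ T)).Adj a b →
      ∃ u i, u ∈ X i ∧ u ∉ T ∧
        ((a = Sum.inl u ∧ b = Sum.inr i) ∨ (a = Sum.inr i ∧ b = Sum.inl u)) := by
    intro a b hab
    rw [incidenceGraph, SimpleGraph.fromRel_adj] at hab
    obtain ⟨-, h | h⟩ := hab
    · obtain ⟨u, i, rfl, rfl, hu⟩ := h
      rw [Finset.mem_sdiff] at hu
      exact ⟨u, i, hu.1, hu.2, Or.inl ⟨rfl, rfl⟩⟩
    · obtain ⟨u, i, rfl, rfl, hu⟩ := h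
      rw [Finset.mem_sdiff] at hu
      exact ⟨u, i, hu.1, hu.2, Or.inr ⟨rfl, rfl⟩⟩
  have hdne : p.darts ≠ [] := by
    intro h
    apply hp.not_nil
    rw [SimpleGraph.Walk.nil_iff_length_eq, ← SimpleGraph.Walk.length_darts, h]
    rfl
  have hsnd := p.map_snd_darts
  have hfst := p.map_fst_darts
  have hfst_nodup := darts_fst_nodup_grt hp
  have hvtail : v ∈ p.support.tail := by
    have h0 : (p.darts.getLast hdne).snd ∈ p.darts.map (·.snd) :=
      List.mem_map_of_mem (List.getLast_mem hdne)
    rw [hsnd, p.getLast_darts_eq_lastDart hdne] at h0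
    exact h0
  have hmem_fst : ∀ a, a ∈ p.support.tail → a ∈ p.darts.map (·.fst) := by
    intro a ha
    have ha2 : a ∈ p.support := by
      rw [p.support_eq_cons]; exact List.mem_cons_of_mem _ ha
    rw [← p.map_fst_darts_append] at ha2
    rcases List.mem_append.1 ha2 with h | h
    · exact h
    · rw [List.mem_singleton] at h
      subst h
      have h0 : (p.darts.head hdne).fst ∈ p.darts.map (·.fst) :=
        List.mem_map_of_mem (List.head_mem hdne)
      rw [p.head_darts_eq_firstDart hdne] at h0
      exact h0
  have hmem_tail : ∀ a, a ∈ p.darts.map (·.fst) → a ∈ p.support.tail := by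
    intro a ha
    rw [hfst] at ha
    have ha2 : a ∈ p.support := List.dropLast_subset _ ha
    rw [p.support_eq_cons] at ha2
    rcases List.mem_cons.1 ha2 with h | h
    · subst h; exact hvtail
    · exact h
  set A : Finset U := (p.support.tail.filterMap Sum.getLeft?).toFinset with hA
  set B : Finset I := (p.support.tail.filterMap Sum.getRight?).toFinset with hB
  have hmemA : ∀ u : U, u ∈ A ↔ Sum.inl u ∈ p.support.tail := by
    intro u
    simp [hA, List.mem_filterMap, Sum.getLeft?_eq_some_iff]
  have hmemB : ∀ i : I, i ∈ B ↔ Sum.inr i ∈ p.support.tail := by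
    intro i
    simp [hB, List.mem_filterMap, Sum.getRight?_eq_some_iff]
  have hdsnd : ∀ a ∈ p.support.tail, ∃ d ∈ p.darts, d.snd = a := by
    intro a ha
    rw [← hsnd] at ha
    obtain ⟨d, hd, hda⟩ := List.mem_map.1 ha
    exact ⟨d, hd, hda⟩
  have hdfst : ∀ a ∈ p.support.tail, ∃ d ∈ p.darts, d.fst = a := by
    intro a ha
    obtain ⟨d, hd, hda⟩ := List.mem_map.1 (hmem_fst a ha)
    exact ⟨d, hd, hda⟩
  have hmain : ∀ u : U, Sum.inl u ∈ p.support.tail →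
      ∃ i, i ∈ B ∧ u ∈ X i ∧ u ∉ T ∧
        ∃ d ∈ p.darts, d.fst = Sum.inr i ∧ d.snd = Sum.inl u := by
    intro u hu
    obtain ⟨d, hd, hds⟩ := hdsnd _ hu
    obtain ⟨u', i, huX', huT', hcase⟩ := hadj _ _ d.adj
    rcases hcase with ⟨h1, h2⟩ | ⟨h1, h2⟩
    · rw [hds] at h2; exact absurd h2 (by simp)
    · rw [hds] at h2
      obtain rfl : u' = u := Sum.inl.inj h2.symm
      refine ⟨i, ?_, huX', huT', d, hd, h1, hds⟩
      rw [hmemB]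
      apply hmem_tail
      rw [← h1]
      exact List.mem_map_of_mem hd
  have hAT : Disjoint A T := by
    rw [Finset.disjoint_left]
    intro u huA huT
    obtain ⟨i, -, -, huT', -⟩ := hmain u ((hmemA u).1 huA)
    exact huT' huT
  have hAne : A.Nonempty := by
    obtain ⟨d, hd⟩ := List.exists_mem_of_ne_nil p.darts hdne
    obtain ⟨u, i, -, -, hcase⟩ := hadj _ _ d.adj
    rcases hcase with ⟨h1, h2⟩ | ⟨h1, h2⟩
    · refine ⟨u, (hmemA u).2 ?_⟩
      apply hmem_tail
      rw [← h1]
      exact List.mem_map_of_mem hd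
    · refine ⟨u, (hmemA u).2 ?_⟩
      rw [← hsnd, ← h2]
      exact List.mem_map_of_mem hd
  have hB2 : ∀ i ∈ B, ∃ u1 u2 : U, u1 ≠ u2 ∧ u1 ∈ A ∧ u2 ∈ A ∧
      u1 ∈ X i ∧ u1 ∉ T ∧ u2 ∈ X i ∧ u2 ∉ T := by
    intro i hi
    have hitail := (hmemB i).1 hi
    obtain ⟨d1, hd1, h1s⟩ := hdsnd _ hitail
    obtain ⟨d2, hd2, h2f⟩ := hdfst _ hitail
    obtain ⟨u1, i1, hu1X, hu1T, hc1⟩ := hadj _ _ d1.adj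
    rcases hc1 with ⟨ha, hb⟩ | ⟨ha, hb⟩
    swap
    · rw [h1s] at hb; exact absurd hb (by simp)
    · rw [h1s] at hb
      have hii : i1 = i := Sum.inr.inj hb.symm
      rw [hii] at hu1X
      obtain ⟨u2, i2, hu2X, hu2T, hc2⟩ := hadj _ _ d2.adj
      rcases hc2 with ⟨hc, hdd⟩ | ⟨hc, hdd⟩
      · rw [h2f] at hc; exact absurd hc (by simp)
      · rw [h2f] at hc
        have hii2 : i2 = i := Sum.inr.inj hc.symm
        rw [hii2] at hu2X
        have hu1A : u1 ∈ A := by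
          rw [hmemA]
          apply hmem_tail
          rw [← ha]
          exact List.mem_map_of_mem hd1
        have hu2A : u2 ∈ A := by
          rw [hmemA, ← hsnd, ← hdd]
          exact List.mem_map_of_mem hd2
        refine ⟨u1, u2, ?_, hu1A, hu2A, hu1X, hu1T, hu2X, hu2T⟩
        intro he
        subst he
        have hnodup : (p.darts.map SimpleGraph.Dart.edge).Nodup := hp.edges_nodup
        have hedge : d1.edge = d2.edge := by
          rw [SimpleGraph.dart_edge_eq_iff]
          right
          apply SimpleGraph.Dart.ext
          rw [Prod.ext_iff]
          constructor
          · show d1.toProd.1 = d2.symm.toProd.1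
            rw [SimpleGraph.Dart.symm_toProd]
            show d1.fst = d2.snd
            rw [ha, hdd]
          · show d1.toProd.2 = d2.symm.toProd.2
            rw [SimpleGraph.Dart.symm_toProd]
            show d1.snd = d2.fst
            rw [h1s, h2f]
        have hd12 : d1 = d2 := List.inj_on_of_nodup_map hnodup hd1 hd2 hedge
        rw [hd12, hdd] at h1s
        exact absurd h1s (by simp)
  obtain ⟨u₀, hu₀⟩ := hAne
  obtain ⟨i₀, -⟩ := hmain u₀ ((hmemA u₀).1 hu₀)
  set f : U → I := fun u =>
    if h : ∃ i, ∃ d ∈ p.darts, d.fst = Sum.inr i ∧ d.snd = Sum.inl u then h.choose else i₀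
    with hfdef
  have hf : ∀ u : U, Sum.inl u ∈ p.support.tail →
      (∃ d ∈ p.darts, d.fst = Sum.inr (f u) ∧ d.snd = Sum.inl u) ∧ f u ∈ B := by
    intro u hu
    obtain ⟨i, hiB, hiX, hiT, hd⟩ := hmain u hu
    have hex : ∃ i, ∃ d ∈ p.darts, d.fst = Sum.inr i ∧ d.snd = Sum.inl u := ⟨i, hd⟩
    have h1 : ∃ d ∈ p.darts, d.fst = Sum.inr (f u) ∧ d.snd = Sum.inl u := by
      rw [hfdef]
      simp only [dif_pos hex]
      exact hex.choose_spec
    refine ⟨h1, ?_⟩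
    obtain ⟨d, hd', hdf, -⟩ := h1
    rw [hmemB]
    apply hmem_tail
    rw [← hdf]
    exact List.mem_map_of_mem hd'
  have hcardAB : A.card ≤ B.card := by
    refine Finset.card_le_card_of_injOn f
      (fun u hu => (hf u ((hmemA u).1 hu)).2) ?_
    intro u1 h1 u2 h2 hf12
    obtain ⟨⟨d1, hd1, hd1f, hd1s⟩, -⟩ := hf u1 ((hmemA u1).1 (by simpa using h1))
    obtain ⟨⟨d2, hd2, hd2f, hd2s⟩, -⟩ := hf u2 ((hmemA u2).1 (by simpa using h2))
    have hd12 : d1 = d2 :=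
      List.inj_on_of_nodup_map hfst_nodup hd1 hd2 (by rw [hd1f, hd2f, hf12])
    rw [hd12, hd2s] at hd1s
    exact Sum.inl.inj hd1s.symm
  refine key A (fun i => if i ∈ B then 1 else 0) 0 ⟨u₀, hu₀⟩ hAT ?_ ?_ ?_
  · intro i
    by_cases hiB : i ∈ B
    · obtain ⟨u1, u2, hne12, hu1A, hu2A, hu1X, hu1T, hu2X, hu2T⟩ := hB2 i hiB
      have hsub2 : insert u1 (insert u2 (T ∩ X i)) ⊆ (T ∪ A) ∩ X i := by
        intro x hx
        rcases Finset.mem_insert.1 hx with rfl | hx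
        · exact Finset.mem_inter.2 ⟨Finset.mem_union_right _ hu1A, hu1X⟩
        rcases Finset.mem_insert.1 hx with rfl | hx
        · exact Finset.mem_inter.2 ⟨Finset.mem_union_right _ hu2A, hu2X⟩
        · exact Finset.mem_inter.2 ⟨Finset.mem_union_left _ (Finset.mem_inter.1 hx).1,
            (Finset.mem_inter.1 hx).2⟩
      have hu2ni : u2 ∉ T ∩ X i := fun hm => hu2T (Finset.mem_inter.1 hm).1
      have hu1ni : u1 ∉ insert u2 (T ∩ X i) := by
        intro hm
        rcases Finset.mem_insert.1 hm with h | h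
        · exact hne12 h
        · exact hu1T (Finset.mem_inter.1 h).1
      have hcc : (insert u1 (insert u2 (T ∩ X i))).card = (T ∩ X i).card + 2 := by
        rw [Finset.card_insert_of_notMem hu1ni, Finset.card_insert_of_notMem hu2ni]
      have hle := Finset.card_le_card hsub2
      rw [hcc] at hle
      beta_reduce
      rw [if_pos hiB]
      omega
    · beta_reduce
      rw [if_neg hiB, add_zero]
      exact Nat.div_le_div_right (Finset.card_le_card (Finset.inter_subset_inter
        Finset.subset_union_left (le_refl _)))
  · intro j
    simp only [Pi.zero_apply, add_zero]
    exact Finset.card_le_card (Finset.inter_subset_inter Finset.subset_union_left (le_refl _))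
  · simpa [Finset.sum_ite_mem] using hcardAB



end GRT
end

section
/- Let U be a finite set and let (K_i)_{i∈I} be a finite indexed family of subsets of U whose incidence graph is acyclic (a hyperforest). Then for every nonempty S ⊆ U one has Σ_{i∈I} ⌊|S∩K_i|/2⌋ < |S|. In particular, the function σ(T) = Σ_{i∈I} ⌊|T∩K_i|/2⌋ − |T| satisfies σ(T) < 0 = σ(∅) for every nonempty T ⊆ U, so ∅ is the unique σ-maximal set. -/
namespace GRT

variable {V : Type*}

private lemma path_length_eq_dist {W : Type*} {G : SimpleGraph W} (hG : G.IsAcyclic)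
    {u r : W} {p : G.Walk u r} (hp : p.IsPath) : p.length = G.dist u r := by
  obtain ⟨q, hq, hql⟩ := (p.reachable).exists_path_of_dist
  have h := hG.path_unique ⟨p, hp⟩ ⟨q, hq⟩
  rw [← hql]
  exact congrArg SimpleGraph.Walk.length (congrArg Subtype.val h)

private lemma dist_ne_of_adj {W : Type*} {G : SimpleGraph W} (hG : G.IsAcyclic)
    {u v r : W} (huv : G.Adj u v) (hr : G.Reachable v r) : G.dist u r ≠ G.dist v r := by
  classical
  intro h
  obtain ⟨q, hq, hql⟩ := hr.exists_path_of_dist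
  by_cases hu : u ∈ q.support
  · have h1 : (q.takeUntil u hu).length + (q.dropUntil u hu).length = q.length := by
      rw [← SimpleGraph.Walk.length_append, q.take_spec hu]
    have h2 : 1 ≤ (q.takeUntil u hu).length := by
      rcases Nat.eq_zero_or_pos (q.takeUntil u hu).length with h0 | h0
      · exact absurd (SimpleGraph.Walk.eq_of_length_eq_zero h0) huv.ne'
      · exact h0
    have h3 : G.dist u r ≤ (q.dropUntil u hu).length := SimpleGraph.dist_le _
    omega
  · have hp : (SimpleGraph.Walk.cons huv q).IsPath := hq.cons hu
    have hl := path_length_eq_dist hG hp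
    rw [SimpleGraph.Walk.length_cons, hql] at hl
    omega

private lemma near_unique {W : Type*} {G : SimpleGraph W} (hG : G.IsAcyclic)
    {u v w r : W} (huv : G.Adj u v) (huw : G.Adj u w)
    (hrv : G.Reachable v r) (hrw : G.Reachable w r)
    (hv : G.dist v r < G.dist u r) (hw : G.dist w r < G.dist u r) : v = w := by
  classical
  obtain ⟨qv, hqv, hqvl⟩ := hrv.exists_path_of_dist
  obtain ⟨qw, hqw, hqwl⟩ := hrw.exists_path_of_dist
  have huqv : u ∉ qv.support := by
    intro hu
    have h3 : G.dist u r ≤ (qv.dropUntil u hu).length := SimpleGraph.dist_le _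
    have h4 := SimpleGraph.Walk.length_dropUntil_le qv hu
    omega
  have huqw : u ∉ qw.support := by
    intro hu
    have h3 : G.dist u r ≤ (qw.dropUntil u hu).length := SimpleGraph.dist_le _
    have h4 := SimpleGraph.Walk.length_dropUntil_le qw hu
    omega
  have h1 : (SimpleGraph.Walk.cons huv qv).IsPath := hqv.cons huqv
  have h2 : (SimpleGraph.Walk.cons huw qw).IsPath := hqw.cons huqw
  have h := hG.path_unique ⟨_, h1⟩ ⟨_, h2⟩
  have hs := congrArg (fun p : G.Path u r => (p : G.Walk u r).support) h
  simp only [SimpleGraph.Walk.support_cons] at hs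
  have hs' : qv.support = qw.support := by
    exact List.cons_injective hs
  have h5 : qv.support = v :: qv.support.tail := qv.support_eq_cons
  have h6 : qw.support = w :: qw.support.tail := qw.support_eq_cons
  rw [h5, h6] at hs'
  exact (List.cons.injEq _ _ _ _ ▸ hs').1

private lemma forest_pair_bound {W : Type*} [Fintype W] [Nonempty W] {G : SimpleGraph W}
    (hG : G.IsAcyclic) {α : Type*} (P : Finset α) (e1 e2 : α → W)
    (hadj : ∀ p ∈ P, G.Adj (e1 p) (e2 p))
    (hinj : ∀ p ∈ P, ∀ q ∈ P, e1 p = e1 q → e2 p = e2 q → p = q)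
    (hside : ∀ p ∈ P, ∀ q ∈ P, e1 p ≠ e2 q) :
    P.card + 1 ≤ Fintype.card W := by
  classical
  set root : W → W := fun v => (G.connectedComponentMk v).out with hrootdef
  have hreach : ∀ v, G.Reachable v (root v) := by
    intro v
    exact (SimpleGraph.ConnectedComponent.exact ((G.connectedComponentMk v).out_eq)).symm
  have hrooteq : ∀ {a b : W}, G.Reachable a b → root a = root b := by
    intro a b hab
    simp only [hrootdef]
    rw [SimpleGraph.ConnectedComponent.eq.mpr hab]
  -- far endpoint map
  set far : α → W := fun p =>
    if G.dist (e1 p) (root (e1 p)) < G.dist (e2 p) (root (e1 p)) then e2 p else e1 p with hfardef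
  have hre2 : ∀ p ∈ P, G.Reachable (e2 p) (root (e1 p)) := fun p hp =>
    ((hadj p hp).symm.reachable).trans (hreach _)
  have hdne : ∀ p ∈ P, G.dist (e1 p) (root (e1 p)) ≠ G.dist (e2 p) (root (e1 p)) :=
    fun p hp => dist_ne_of_adj hG (hadj p hp) (hre2 p hp)
  -- far p has strictly bigger distance than the other endpoint, to root (e1 p)
  have hfar_big : ∀ p ∈ P, 0 < G.dist (far p) (root (e1 p)) := by
    intro p hp
    have hne := hdne p hp
    by_cases h : G.dist (e1 p) (root (e1 p)) < G.dist (e2 p) (root (e1 p))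
    · simp only [hfardef, if_pos h]; omega
    · simp only [hfardef, if_neg h]; omega
  have hfar_root : ∀ p ∈ P, root (far p) = root (e1 p) := by
    intro p hp
    by_cases h : G.dist (e1 p) (root (e1 p)) < G.dist (e2 p) (root (e1 p))
    · simp only [hfardef, if_pos h]
      exact hrooteq ((hadj p hp).symm.reachable)
    · simp only [hfardef, if_neg h]
  set R : Finset W := Finset.univ.image root with hRdef
  have hfar_notR : ∀ p ∈ P, far p ∉ R := by
    intro p hp hmem
    obtain ⟨w, -, hw⟩ := Finset.mem_image.mp hmem
    have h1 : root (far p) = far p := by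
      rw [← hw]; exact (hrooteq (hreach w)).symm
    have h2 : far p = root (e1 p) := by rw [← h1, hfar_root p hp]
    have h3 := hfar_big p hp
    rw [h2, SimpleGraph.dist_self] at h3
    omega
  have hinjfar : Set.InjOn far ↑P := by
    intro p hp q hq h
    simp only [Finset.mem_coe] at hp hq
    have hrr : root (e1 p) = root (e1 q) := by
      rw [← hfar_root p hp, h, hfar_root q hq]
    have hnep := hdne p hp
    have hneq := hdne q hq
    by_cases h1 : G.dist (e1 p) (root (e1 p)) < G.dist (e2 p) (root (e1 p)) <;>
    by_cases h2 : G.dist (e1 q) (root (e1 q)) < G.dist (e2 q) (root (e1 q))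
    · -- far p = e2 p, far q = e2 q
      have hfp : far p = e2 p := by simp only [hfardef, if_pos h1]
      have hfq : far q = e2 q := by simp only [hfardef, if_pos h2]
      rw [hfp, hfq] at h
      have hAdj2 : G.Adj (e2 p) (e1 q) := by rw [h]; exact (hadj q hq).symm
      have hkey : e1 p = e1 q := by
        refine near_unique hG (hadj p hp).symm hAdj2 (hreach (e1 p)) ?_ h1 ?_
        · rw [hrr]; exact hreach (e1 q)
        · rw [hrr, h]; exact h2
      exact hinj p hp q hq hkey h
    · have hfp : far p = e2 p := by simp only [hfardef, if_pos h1]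
      have hfq : far q = e1 q := by simp only [hfardef, if_neg h2]
      rw [hfp, hfq] at h
      exact absurd h.symm (hside q hq p hp)
    · have hfp : far p = e1 p := by simp only [hfardef, if_neg h1]
      have hfq : far q = e2 q := by simp only [hfardef, if_pos h2]
      rw [hfp, hfq] at h
      exact absurd h (hside p hp q hq)
    · -- far p = e1 p, far q = e1 q
      have hfp : far p = e1 p := by simp only [hfardef, if_neg h1]
      have hfq : far q = e1 q := by simp only [hfardef, if_neg h2]
      rw [hfp, hfq] at h
      have hAdj2 : G.Adj (e1 p) (e2 q) := by rw [h]; exact hadj q hq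
      have hkey : e2 p = e2 q := by
        refine near_unique hG (hadj p hp) hAdj2 (hre2 p hp) ?_ (by omega) ?_
        · rw [hrr]; exact hre2 q hq
        · rw [hrr, h]; omega
      exact hinj p hp q hq h hkey
  have hcard : P.card = (P.image far).card := (Finset.card_image_of_injOn hinjfar).symm
  have hsub : P.image far ⊆ Finset.univ \ R := by
    intro x hx
    obtain ⟨p, hp, hpx⟩ := Finset.mem_image.mp hx
    rw [Finset.mem_sdiff]
    exact ⟨Finset.mem_univ _, hpx ▸ hfar_notR p hp⟩
  have hle : (P.image far).card ≤ (Finset.univ \ R).card := Finset.card_le_card hsub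
  have hRcard : (Finset.univ \ R).card = Fintype.card W - R.card := by
    rw [Finset.card_sdiff_of_subset (Finset.subset_univ R), Finset.card_univ]
  have hR1 : 1 ≤ R.card := Finset.card_pos.mpr
    ⟨root (Classical.arbitrary W), Finset.mem_image_of_mem _ (Finset.mem_univ _)⟩
  have hR2 : R.card ≤ Fintype.card W := by
    rw [← Finset.card_univ]; exact Finset.card_le_card (Finset.subset_univ R)
  omega

private lemma main_ineq {U I : Type*} [DecidableEq U] [Fintype U] [Fintype I]
    (K : I → Finset U) (hforest : (incidenceGraph K).IsAcyclic)
    (S : Finset U) (hS : S.Nonempty) : ∑ i, (S ∩ K i).card / 2 < S.card := by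
  classical
  set J : Finset I := Finset.univ.filter (fun i => 2 ≤ (S ∩ K i).card) with hJdef
  set F : Finset (U ⊕ I) := S.image Sum.inl ∪ J.image Sum.inr with hFdef
  have hne : Nonempty {x // x ∈ F} := by
    obtain ⟨u, hu⟩ := hS
    exact ⟨⟨Sum.inl u, Finset.mem_union_left _ (Finset.mem_image_of_mem _ hu)⟩⟩
  set G' : SimpleGraph {x // x ∈ F} := (incidenceGraph K).comap (fun x => x.val) with hG'def
  have hG'ac : G'.IsAcyclic := by
    intro v c hc
    let emb : G' ↪g incidenceGraph K :=
      SimpleGraph.Embedding.comap (Function.Embedding.subtype _) (incidenceGraph K)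
    exact hforest _ (hc.map (f := emb.toHom) emb.injective)
  set P : Finset (U × I) := (S ×ˢ J).filter (fun p => p.1 ∈ K p.2) with hPdef
  have hPmem : ∀ p : U × I, p ∈ P ↔ p.1 ∈ S ∧ p.2 ∈ J ∧ p.1 ∈ K p.2 := by
    intro p
    simp [hPdef, Finset.mem_filter, Finset.mem_product, and_assoc]
  have hmem1 : ∀ p : U × I, p ∈ P → Sum.inl p.1 ∈ F := fun p hp =>
    Finset.mem_union_left _ (Finset.mem_image_of_mem _ ((hPmem p).mp hp).1)
  have hmem2 : ∀ p : U × I, p ∈ P → Sum.inr p.2 ∈ F := fun p hp =>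
    Finset.mem_union_right _ (Finset.mem_image_of_mem _ ((hPmem p).mp hp).2.1)
  set e1 : U × I → {x // x ∈ F} := fun p =>
    if h : Sum.inl p.1 ∈ F then ⟨Sum.inl p.1, h⟩ else Classical.arbitrary _ with he1def
  set e2 : U × I → {x // x ∈ F} := fun p =>
    if h : Sum.inr p.2 ∈ F then ⟨Sum.inr p.2, h⟩ else Classical.arbitrary _ with he2def
  have he1 : ∀ p ∈ P, (e1 p).val = Sum.inl p.1 := by
    intro p hp; simp only [he1def, dif_pos (hmem1 p hp)]
  have he2 : ∀ p ∈ P, (e2 p).val = Sum.inr p.2 := by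
    intro p hp; simp only [he2def, dif_pos (hmem2 p hp)]
  have hbound : P.card + 1 ≤ Fintype.card {x // x ∈ F} := by
    refine forest_pair_bound hG'ac P e1 e2 ?_ ?_ ?_
    · intro p hp
      have : (incidenceGraph K).Adj (Sum.inl p.1) (Sum.inr p.2) := by
        rw [incidenceGraph, SimpleGraph.fromRel_adj]
        refine ⟨by simp, Or.inl ⟨p.1, p.2, rfl, rfl, ((hPmem p).mp hp).2.2⟩⟩
      have h' : (incidenceGraph K).Adj (e1 p).val (e2 p).val := by
        rw [he1 p hp, he2 p hp]; exact this
      exact h'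
    · intro p hp q hq h1 h2
      have h1' : (Sum.inl p.1 : U ⊕ I) = Sum.inl q.1 := by rw [← he1 p hp, ← he1 q hq, h1]
      have h2' : (Sum.inr p.2 : U ⊕ I) = Sum.inr q.2 := by rw [← he2 p hp, ← he2 q hq, h2]
      exact Prod.ext (Sum.inl_injective h1') (Sum.inr_injective h2')
    · intro p hp q hq h
      have : (Sum.inl p.1 : U ⊕ I) = Sum.inr q.2 := by rw [← he1 p hp, ← he2 q hq, h]
      simp at this
  have hcardF : Fintype.card {x // x ∈ F} = S.card + J.card := by
    rw [Fintype.card_coe, hFdef,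
      Finset.card_union_of_disjoint, Finset.card_image_of_injective _ Sum.inl_injective,
      Finset.card_image_of_injective _ Sum.inr_injective]
    · rw [Finset.disjoint_left]
      rintro a ha hb
      obtain ⟨u, -, rfl⟩ := Finset.mem_image.mp ha
      obtain ⟨i, -, h⟩ := Finset.mem_image.mp hb
      exact Sum.inl_ne_inr h.symm
  have hPcard : P.card = ∑ i ∈ J, (S ∩ K i).card := by
    have : P = J.biUnion (fun i => (S ∩ K i).image (fun u => (u, i))) := by
      ext p
      simp only [Finset.mem_biUnion, Finset.mem_image, Finset.mem_inter, hPmem]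
      constructor
      · rintro ⟨h1, h2, h3⟩; exact ⟨p.2, h2, p.1, ⟨h1, h3⟩, rfl⟩
      · rintro ⟨i, hi, u, ⟨hu1, hu2⟩, rfl⟩; exact ⟨hu1, hi, hu2⟩
    rw [this, Finset.card_biUnion]
    · exact Finset.sum_congr rfl fun i _ =>
        Finset.card_image_of_injective _ (fun a b h => (Prod.ext_iff.mp h).1)
    · intro i hi j hj hij
      simp only [Finset.disjoint_left, Finset.mem_image]
      rintro a ⟨u, -, rfl⟩ ⟨v, -, h⟩
      exact hij ((Prod.ext_iff.mp h).2).symm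
  have hsum_eq : ∑ i, (S ∩ K i).card / 2 = ∑ i ∈ J, (S ∩ K i).card / 2 := by
    refine (Finset.sum_subset (Finset.subset_univ J) ?_).symm
    intro i _ hi
    simp only [hJdef, Finset.mem_filter, Finset.mem_univ, true_and, not_le] at hi
    omega
  have hterm : ∑ i ∈ J, (S ∩ K i).card / 2 + J.card ≤ ∑ i ∈ J, (S ∩ K i).card := by
    calc ∑ i ∈ J, (S ∩ K i).card / 2 + J.card
        = ∑ i ∈ J, ((S ∩ K i).card / 2 + 1) := by
          rw [Finset.sum_add_distrib, Finset.sum_const, smul_eq_mul, mul_one]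
      _ ≤ ∑ i ∈ J, (S ∩ K i).card := by
          refine Finset.sum_le_sum fun i hi => ?_
          simp only [hJdef, Finset.mem_filter, Finset.mem_univ, true_and] at hi
          omega
  rw [hsum_eq]
  omega

/-- stability of acyclicity: if the incidence graph of `(K_i)` is acyclic
then `Σ_i ⌊|S∩K_i|/2⌋ < |S|` for every nonempty `S ⊆ U`; consequently, for
`σ(T) = Σ_i ⌊|T∩K_i|/2⌋ − |T|`, the empty set is the unique `σ`-maximal set. -/
theorem hyperforest_sum_lt {U I : Type*} [DecidableEq U] [Fintype U] [Fintype I]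
    (K : I → Finset U) (hforest : (incidenceGraph K).IsAcyclic)
    (σ : Finset U → ℤ)
    (hσ : ∀ S : Finset U, σ S = (∑ i, (((S ∩ K i).card / 2 : ℕ) : ℤ)) - S.card) :
    (∀ S : Finset U, S.Nonempty → ∑ i, (S ∩ K i).card / 2 < S.card) ∧
    (∀ T : Finset U, T ≠ ∅ → σ T < 0) ∧ σ ∅ = 0 ∧
    (∀ T : Finset U,
      ((∀ S : Finset U, σ S ≤ σ T) ∧ ∀ T' : Finset U, T ⊂ T' → σ T' < σ T) ↔ T = ∅) := by
  have hmain : ∀ S : Finset U, S.Nonempty → ∑ i, (S ∩ K i).card / 2 < S.card :=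
    fun S hS => main_ineq K hforest S hS
  have hempty : σ ∅ = 0 := by
    rw [hσ]; simp
  have hneg : ∀ T : Finset U, T ≠ ∅ → σ T < 0 := by
    intro T hT
    have h := hmain T (Finset.nonempty_iff_ne_empty.mpr hT)
    rw [hσ]
    have hcast : (∑ i, (((T ∩ K i).card / 2 : ℕ) : ℤ)) = ((∑ i, (T ∩ K i).card / 2 : ℕ) : ℤ) := by
      push_cast; rfl
    rw [hcast]
    have h2 : ((∑ i, (T ∩ K i).card / 2 : ℕ) : ℤ) < (T.card : ℤ) := by exact_mod_cast h
    omega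
  refine ⟨hmain, hneg, hempty, ?_⟩
  intro T
  constructor
  · rintro ⟨hle, -⟩
    by_contra hT
    have h1 := hneg T hT
    have h2 := hle ∅
    rw [hempty] at h2
    omega
  · rintro rfl
    refine ⟨?_, ?_⟩
    · intro S
      rcases eq_or_ne S ∅ with rfl | hS
      · exact le_refl _
      · rw [hempty]; exact (hneg S hS).le
    · intro T' hT'
      rw [hempty]
      exact hneg T' hT'.ne'

end GRT
end

section
/- For all integers κ ≥ 0 and ℓ ≥ 2, the binomial coefficients satisfy C(3κ+1, ℓ) ≥ 2·C(2κ+1, ℓ). -/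
lemma desc_aux (κ : ℕ) : ∀ ℓ, 2 ≤ ℓ →
    2 * Nat.descFactorial (2 * κ + 1) ℓ ≤ Nat.descFactorial (3 * κ + 1) ℓ := by
  intro ℓ hℓ
  induction ℓ, hℓ using Nat.le_induction with
  | base =>
    show 2 * Nat.descFactorial (2 * κ + 1) 2 ≤ Nat.descFactorial (3 * κ + 1) 2
    simp [Nat.descFactorial]
    nlinarith [sq_nonneg κ, Nat.zero_le κ]
  | succ n hn ih =>
    rw [Nat.descFactorial_succ, Nat.descFactorial_succ, Nat.mul_left_comm]
    exact Nat.mul_le_mul (Nat.sub_le_sub_right (by omega) n) ih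

/-- for all `κ ≥ 0` and `ℓ ≥ 2`, `C(3κ+1, ℓ) ≥ 2·C(2κ+1, ℓ)`. -/
theorem binom_three_two (κ ℓ : ℕ) (hℓ : 2 ≤ ℓ) :
    2 * Nat.choose (2 * κ + 1) ℓ ≤ Nat.choose (3 * κ + 1) ℓ := by
  have h := desc_aux κ ℓ hℓ
  rw [Nat.descFactorial_eq_factorial_mul_choose, Nat.descFactorial_eq_factorial_mul_choose,
    Nat.mul_left_comm] at h
  exact Nat.le_of_mul_le_mul_left h (Nat.factorial_pos ℓ)
end

section
/- For all nonnegative integers n, a, b, r, the binomial coefficients satisfy C(n+a+b, r) + C(n, r) ≥ C(n+a, r) + C(n+b, r). -/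
/-- for all nonnegative integers `n, a, b, r`,
`C(n+a+b, r) + C(n, r) ≥ C(n+a, r) + C(n+b, r)`. -/
theorem binom_supermodular (n a b r : ℕ) :
    Nat.choose (n + a) r + Nat.choose (n + b) r ≤
      Nat.choose (n + a + b) r + Nat.choose n r := by
  induction b with
  | zero => simp
  | succ b ih =>
    cases r with
    | zero => simp
    | succ r =>
      have h1 : n + a + (b + 1) = (n + a + b) + 1 := by ring
      have h2 : n + (b + 1) = (n + b) + 1 := by ring
      rw [h1, h2, Nat.choose_succ_succ, Nat.choose_succ_succ]
      have hm : Nat.choose (n + b) r ≤ Nat.choose (n + a + b) r :=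
        Nat.choose_le_choose r (by omega)
      simp only [Nat.succ_eq_add_one] at *
      omega
end

section
/- For all integers y ≥ 0, κ ≥ 0 and ℓ ≥ 1, the binomial coefficients satisfy C(y+3κ+1, ℓ) + C(y+1, ℓ) + κ·C(y+κ, ℓ−1) ≥ 2·C(y+2κ+1, ℓ). -/
lemma choose_telescope (a k m : ℕ) :
    Nat.choose (a + k) (m + 1) =
      Nat.choose a (m + 1) + ∑ i ∈ Finset.range k, Nat.choose (a + i) m := by
  induction k with
  | zero => simp
  | succ k ih =>
      rw [Finset.sum_range_succ, ← Nat.add_assoc,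
        Nat.choose_succ_succ' (a + k) m, ih]
      ring

/-- for all `y, κ ≥ 0` and `ℓ ≥ 1`,
`C(y+3κ+1, ℓ) + C(y+1, ℓ) + κ·C(y+κ, ℓ−1) ≥ 2·C(y+2κ+1, ℓ)`. -/
theorem binom_gamma_nonneg (y κ ℓ : ℕ) (hℓ : 1 ≤ ℓ) :
    2 * Nat.choose (y + 2 * κ + 1) ℓ ≤
      Nat.choose (y + 3 * κ + 1) ℓ + Nat.choose (y + 1) ℓ +
        κ * Nat.choose (y + κ) (ℓ - 1) := by
  obtain ⟨m, rfl⟩ : ∃ m, ℓ = m + 1 := ⟨ℓ - 1, (Nat.succ_pred_eq_of_pos hℓ).symm⟩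
  simp only [Nat.add_sub_cancel]
  have h3 : y + 3 * κ + 1 = (y + 2 * κ + 1) + κ := by ring
  have h2 : y + 2 * κ + 1 = (y + κ + 1) + κ := by ring
  have h1 : y + κ + 1 = (y + 1) + κ := by ring
  rw [h3, choose_telescope (y + 2 * κ + 1) κ m, h2,
    choose_telescope (y + κ + 1) κ m, h1, choose_telescope (y + 1) κ m]
  have hS1 : ∑ i ∈ Finset.range κ, Nat.choose (y + 1 + i) m ≤
      κ * Nat.choose (y + κ) m := by
    calc ∑ i ∈ Finset.range κ, Nat.choose (y + 1 + i) m
        ≤ ∑ _i ∈ Finset.range κ, Nat.choose (y + κ) m := by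
          apply Finset.sum_le_sum
          intro i hi
          have := Finset.mem_range.mp hi
          exact Nat.choose_le_choose m (by omega : y + 1 + i ≤ y + κ)
      _ = κ * Nat.choose (y + κ) m := by simp [Nat.mul_comm]
  have hS2 : ∑ i ∈ Finset.range κ, Nat.choose (y + 1 + κ + i) m ≤
      ∑ i ∈ Finset.range κ, Nat.choose (y + 1 + κ + κ + i) m := by
    apply Finset.sum_le_sum
    intro i hi
    exact Nat.choose_le_choose m (by omega)
  omega
end

section
/- Let ℓ ≥ 2, m ≥ 1 and Λ ≥ m−1 be integers and let n ≥ m + Λ. Define g(κ) = C(κ+1+Λ, ℓ) + C(Λ−κ, ℓ−1)·(n−κ−1−Λ) for integers 0 ≤ κ ≤ m−1 (so that g(κ) = φ_{ℓ,n}(2κ+1, Λ−κ)). Then g is convex on the integer interval [0, m−1]; that is, for every integer κ with 0 ≤ κ ≤ m−3 one has g(κ+2) − g(κ+1) ≥ g(κ+1) − g(κ). -/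
lemma g_convex_key (a j t s : ℕ) :
    2 * (Nat.choose (a + 1) (j + 2) + Nat.choose (t + 1) (j + 1) * (s + 1)) ≤
      Nat.choose (a + 2) (j + 2) + Nat.choose (t + 2) (j + 1) * (s + 2) +
        (Nat.choose a (j + 2) + Nat.choose t (j + 1) * s) := by
  have h1 : Nat.choose (a + 2) (j + 2) = Nat.choose (a + 1) (j + 1) + Nat.choose (a + 1) (j + 2) := by
    rw [show a + 2 = a + 1 + 1 from rfl, show j + 2 = j + 1 + 1 from rfl]
    exact Nat.choose_succ_succ' _ _
  have h2 : Nat.choose (a + 1) (j + 2) = Nat.choose a (j + 1) + Nat.choose a (j + 2) := by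
    rw [show j + 2 = j + 1 + 1 from rfl]
    exact Nat.choose_succ_succ' _ _
  have h3 : Nat.choose (a + 1) (j + 1) = Nat.choose a j + Nat.choose a (j + 1) :=
    Nat.choose_succ_succ' a j
  have h4 : Nat.choose (t + 2) (j + 1) = Nat.choose (t + 1) j + Nat.choose (t + 1) (j + 1) := by
    rw [show t + 2 = t + 1 + 1 from rfl]
    exact Nat.choose_succ_succ' _ _
  have h5 : Nat.choose (t + 1) (j + 1) = Nat.choose t j + Nat.choose t (j + 1) :=
    Nat.choose_succ_succ' t j
  have h6 : Nat.choose t j ≤ Nat.choose (t + 1) j := Nat.choose_le_choose j (Nat.le_succ t)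
  nlinarith [Nat.choose (t + 1) j * s, Nat.choose t j * s, h6]

/-- convexity of `g`: for `ℓ ≥ 2`, `m ≥ 1`, `Λ ≥ m−1`, `n ≥ m+Λ`,
the function `g(κ) = C(κ+1+Λ, ℓ) + C(Λ−κ, ℓ−1)·(n−κ−1−Λ)` is convex on the integer
interval `[0, m−1]`: for `0 ≤ κ ≤ m−3`, `g(κ+2) − g(κ+1) ≥ g(κ+1) − g(κ)`. -/
theorem g_convex (ℓ m Λ n : ℕ) (hℓ : 2 ≤ ℓ) (hm : 1 ≤ m) (hΛ : m - 1 ≤ Λ)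
    (hn : m + Λ ≤ n) (g : ℕ → ℕ)
    (hg : ∀ κ, κ ≤ m - 1 →
      g κ = Nat.choose (κ + 1 + Λ) ℓ + Nat.choose (Λ - κ) (ℓ - 1) * (n - κ - 1 - Λ)) :
    ∀ κ : ℕ, κ + 3 ≤ m →
      (g (κ + 1) : ℤ) - (g κ : ℤ) ≤ (g (κ + 2) : ℤ) - (g (κ + 1) : ℤ) := by
  intro κ hκ
  obtain ⟨j, rfl⟩ : ∃ j, ℓ = j + 2 := ⟨ℓ - 2, by omega⟩
  obtain ⟨t, rfl⟩ : ∃ t, Λ = κ + 2 + t := ⟨Λ - (κ + 2), by omega⟩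
  obtain ⟨s, rfl⟩ : ∃ s, n = κ + 3 + (κ + 2 + t) + s := ⟨n - (κ + 3 + (κ + 2 + t)), by omega⟩
  rw [hg κ (by omega), hg (κ + 1) (by omega), hg (κ + 2) (by omega)]
  have e0 : κ + 2 + t - κ = t + 2 := by omega
  have e1 : κ + 2 + t - (κ + 1) = t + 1 := by omega
  have e2 : κ + 2 + t - (κ + 2) = t := by omega
  have f0 : κ + 3 + (κ + 2 + t) + s - κ - 1 - (κ + 2 + t) = s + 2 := by omega
  have f1 : κ + 3 + (κ + 2 + t) + s - (κ + 1) - 1 - (κ + 2 + t) = s + 1 := by omega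
  have f2 : κ + 3 + (κ + 2 + t) + s - (κ + 2) - 1 - (κ + 2 + t) = s := by omega
  rw [e0, e1, e2, f0, f1, f2]
  have key := g_convex_key (κ + 1 + (κ + 2 + t)) j t s
  have ha1 : κ + 1 + 1 + (κ + 2 + t) = κ + 1 + (κ + 2 + t) + 1 := by omega
  have ha2 : κ + 2 + 1 + (κ + 2 + t) = κ + 1 + (κ + 2 + t) + 2 := by omega
  rw [ha1, ha2]
  push_cast
  push_cast at key
  linarith
end
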